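/- arXiv:2603.08871 — 5 statements merged into one kernel-verified Lean document; each statement's English description precedes it below -/
import Mathlib

section
/- (Lemma 5.) Under the generalized Roy model, the conditional mean of the observed outcome given covariates and instrument depends on the instrument only through the propensity score: E[Y | σ(X,Z)] = E[Y | σ(X, π(X,Z))] P-almost surely. -/
/-!
Conditional independence lets one replace the conditional law of `(Y₀, Y₁, V)` given `(X, Z)` by
its conditional law `κ` given `X` alone. Since `Y = Y₁` on `{V < π(X, Z)}` and `Y = Y₀` elsewhere,
`E[Y | X, Z] = h(X, π(X, Z))` with `h(x, p) = ∫ (if v < p then y₁ else y₀) dκ(x)`. This is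
`σ(X, π(X, Z))`-measurable, so the tower property identifies it with `E[Y | X, π(X, Z)]`.
-/

open MeasureTheory ProbabilityTheory

namespace MeasureTheory

variable {Ω E : Type*} [NormedAddCommGroup E] [NormedSpace ℝ E] [CompleteSpace E]
  {m₁ m₂ m : MeasurableSpace Ω} {μ : Measure Ω} {f : Ω → E}

theorem condExp_ae_eq_condExp_of_le_of_aestronglyMeasurable (h₂₁ : m₂ ≤ m₁) (h₁ : m₁ ≤ m)
    [SigmaFinite (μ.trim h₁)] [SigmaFinite (μ.trim (h₂₁.trans h₁))]
    (hf : AEStronglyMeasurable[m₂] (μ[f | m₁]) μ) :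
    μ[f | m₁] =ᵐ[μ] μ[f | m₂] :=
  (condExp_of_aestronglyMeasurable' (h₂₁.trans h₁) hf integrable_condExp).symm.trans
    (condExp_condExp_of_le h₂₁ h₁)

end MeasureTheory

namespace ProbabilityTheory

variable {Ω α β γ δ E : Type*} [MeasurableSpace Ω] [StandardBorelSpace Ω]
  {μ : Measure Ω} [IsFiniteMeasure μ]
  [MeasurableSpace α] [MeasurableSpace β] [StandardBorelSpace β] [Nonempty β]
  [MeasurableSpace γ] [StandardBorelSpace γ] [Nonempty γ] [MeasurableSpace δ]
  [NormedAddCommGroup E] [NormedSpace ℝ E] [CompleteSpace E]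
  {K : Ω → α} {Z : Ω → β} {W : Ω → γ}

theorem CondIndepFun.condExp_prod_ae_eq_integral_condDistrib (hK : Measurable K)
    (hZ : Measurable Z) (hW : Measurable W) (hCI : Z ⟂ᵢ[K, hK; μ] W)
    {f : (α × β) × γ → E} (hf : StronglyMeasurable f)
    (hfi : Integrable (fun ω => f ((K ω, Z ω), W ω)) μ) :
    μ[fun ω => f ((K ω, Z ω), W ω) | MeasurableSpace.comap (fun ω => (K ω, Z ω)) inferInstance]
      =ᵐ[μ] fun ω => ∫ w, f ((K ω, Z ω), w) ∂condDistrib W K μ (K ω) := by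
  have hKZ : Measurable fun ω => (K ω, Z ω) := hK.prodMk hZ
  have hkernel := (condIndepFun_iff_condDistrib_prod_ae_eq_prodMkRight hW hZ hK).mp hCI
  filter_upwards
    [ProbabilityTheory.condExp_prod_ae_eq_integral_condDistrib hKZ hW.aemeasurable hf hfi,
      ae_of_ae_map hKZ.aemeasurable hkernel] with ω hω hκ
  rw [hω, hκ, Kernel.prodMkRight_apply]

theorem CondIndepFun.condExp_ae_eq_condExp_of_factor (hK : Measurable K)
    (hZ : Measurable Z) (hW : Measurable W) (hCI : Z ⟂ᵢ[K, hK; μ] W)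
    {φ : α × β → δ} (hφ : Measurable φ) {f : (α × δ) × γ → E} (hf : StronglyMeasurable f)
    (hfi : Integrable (fun ω => f ((K ω, φ (K ω, Z ω)), W ω)) μ) :
    μ[fun ω => f ((K ω, φ (K ω, Z ω)), W ω) |
        MeasurableSpace.comap (fun ω => (K ω, Z ω)) inferInstance]
      =ᵐ[μ] μ[fun ω => f ((K ω, φ (K ω, Z ω)), W ω) |
        MeasurableSpace.comap (fun ω => (K ω, φ (K ω, Z ω))) inferInstance] := by
  set g : α × δ → E := fun q => ∫ w, f (q, w) ∂(condDistrib W K μ).prodMkRight δ q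
  have hg : StronglyMeasurable g := hf.integral_kernel_prod_right'
  have hfactor : Measurable[MeasurableSpace.comap (fun ω => (K ω, Z ω)) inferInstance]
      fun ω => (K ω, φ (K ω, Z ω)) :=
    (measurable_fst.prodMk hφ).comp (comap_measurable _)
  refine condExp_ae_eq_condExp_of_le_of_aestronglyMeasurable hfactor.comap_le
    (hK.prodMk hZ).comap_le ⟨fun ω => g (K ω, φ (K ω, Z ω)),
      hg.comp_measurable (comap_measurable _), ?_⟩
  exact CondIndepFun.condExp_prod_ae_eq_integral_condDistrib hK hZ hW hCI
    (f := fun p => f ((p.1.1, φ p.1), p.2))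
    (hf.comp_measurable ((measurable_fst.fst.prodMk (hφ.comp measurable_fst)).prodMk
      measurable_snd)) hfi

end ProbabilityTheory

theorem roy_condexp_outcome_through_propensity_general
    {Ω : Type*} [MeasurableSpace Ω] [StandardBorelSpace Ω]
    (P : Measure Ω) [IsProbabilityMeasure P]
    {k : ℕ} (X : Ω → (Fin k → ℝ)) (Z V Y0 Y1 : Ω → ℝ)
    (hX : Measurable X) (hZ : Measurable Z) (hV : Measurable V)
    (hY0m : Measurable Y0) (hY1m : Measurable Y1)
    (hY0int : Integrable Y0 P) (hY1int : Integrable Y1 P)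
    (pi : (Fin k → ℝ) × ℝ → ℝ) (hpi : Measurable pi)
    (A : Ω → ℝ) (hA : A = fun ω => if pi (X ω, Z ω) > V ω then (1:ℝ) else 0)
    (Y : Ω → ℝ) (hY : Y = fun ω => A ω * Y1 ω + (1 - A ω) * Y0 ω)
    (hCI : CondIndepFun (MeasurableSpace.comap X inferInstance) hX.comap_le Z
      (fun ω => (Y0 ω, Y1 ω, V ω)) P) :
    P[Y | MeasurableSpace.comap (fun ω => (X ω, Z ω)) inferInstance]
      =ᵐ[P]
    P[Y | MeasurableSpace.comap (fun ω => (X ω, pi (X ω, Z ω))) inferInstance] := by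
  have hY_eq : Y = fun ω => if V ω < pi (X ω, Z ω) then Y1 ω else Y0 ω := by
    subst hY hA
    funext ω
    simp only [gt_iff_lt]
    split_ifs <;> ring
  have hY_int : Integrable Y P := by
    classical
    rw [hY_eq]
    exact Integrable.piecewise (measurableSet_lt hV (hpi.comp (hX.prodMk hZ)))
      hY1int.integrableOn hY0int.integrableOn
  rw [hY_eq] at hY_int ⊢
  have h_outcome : StronglyMeasurable fun p : ((Fin k → ℝ) × ℝ) × ℝ × ℝ × ℝ =>
      if p.2.2.2 < p.1.2 then p.2.2.1 else p.2.1 :=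
    (Measurable.ite (measurableSet_lt (by fun_prop) (by fun_prop)) (by fun_prop)
      (by fun_prop)).stronglyMeasurable
  exact hCI.condExp_ae_eq_condExp_of_factor hX hZ (hY0m.prodMk (hY1m.prodMk hV)) hpi
    h_outcome hY_int

/-- Lemma 5: under the generalized Roy model,
`E[Y | σ(X,Z)] = E[Y | σ(X, π(X,Z))]` `P`-almost surely. -/
theorem roy_condexp_outcome_through_propensity
    {Ω : Type*} [MeasurableSpace Ω] [StandardBorelSpace Ω] [Nonempty Ω]
    (P : Measure Ω) [IsProbabilityMeasure P]
    {k : ℕ} (X : Ω → (Fin k → ℝ)) (Z V Y0 Y1 : Ω → ℝ)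
    (hX : Measurable X) (hZ : Measurable Z) (hV : Measurable V)
    (hY0m : Measurable Y0) (hY1m : Measurable Y1)
    (hY0int : Integrable Y0 P) (hY1int : Integrable Y1 P)
    (pi : (Fin k → ℝ) × ℝ → ℝ) (hpi : Measurable pi)
    (hpi01 : ∀ q, pi q ∈ Set.Icc (0:ℝ) 1)
    (A : Ω → ℝ) (hA : A = fun ω => if pi (X ω, Z ω) > V ω then (1:ℝ) else 0)
    (Y : Ω → ℝ) (hY : Y = fun ω => A ω * Y1 ω + (1 - A ω) * Y0 ω)
    (hCI : CondIndepFun (MeasurableSpace.comap X inferInstance) hX.comap_le Z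
      (fun ω => (Y0 ω, Y1 ω, V ω)) P)
    (hUnif : ∀ᵐ x ∂(P.map X),
      condDistrib V X P x = volume.restrict (Set.Icc (0:ℝ) 1)) :
    P[Y | MeasurableSpace.comap (fun ω => (X ω, Z ω)) inferInstance]
      =ᵐ[P]
    P[Y | MeasurableSpace.comap (fun ω => (X ω, pi (X ω, Z ω))) inferInstance] :=
  roy_condexp_outcome_through_propensity_general P X Z V Y0 Y1 hX hZ hV hY0m hY1m hY0int hY1int pi
    hpi A hA Y hY hCI
end

section
/- Under the generalized Roy model, suppose e₁ : ℝ^k × ℝ → ℝ is measurable with e₁(X,V) a version of E[Y₁ | σ(X,V)], and A·Y₁ is integrable. Then the conditional mean of the treated contribution to the observed outcome is the integral of the conditional outcome mean over the selected range of unobserved heterogeneity: E[A·Y₁ | σ(X,Z)] = ∫₀^{π(X,Z)} e₁(X, v) dv P-almost surely. -/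
/-!
Write `κ` for the conditional law of `(Y₁, V)` given `X`. Conditional independence of `Z` and
`(Y₁, V)` given `X` makes `κ` also the conditional law of `(Y₁, V)` given `(X, Z)`, so
`E[A·Y₁ | X, Z] = ∫ 1{v < π(X, Z)} y dκ_X(y, v)`. By the tower property through `σ(X, V)`, for each
fixed cutoff `c` and almost every `x`, `∫ 1{v < c} y dκ_x` equals the integral of `e₁(x, ·)` over
`{v < c}` against the conditional law of `V`, which is uniform on `[0, 1]`. Both sides are
left-continuous in `c`, so agreement at rational cutoffs gives agreement at all cutoffs off a single
null set, and the random cutoff `π(X, Z)` may then be substituted.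
-/

open MeasureTheory ProbabilityTheory Set Filter Topology

theorem tendsto_setIntegral_preimage_Iio_nhdsLT {β E : Type*} [MeasurableSpace β]
    [NormedAddCommGroup E] [NormedSpace ℝ E] {ρ : Measure β} {φ : β → ℝ} {g : β → E}
    (hφ : Measurable φ) (hg : Integrable g ρ) (c : ℝ) :
    Tendsto (fun c' => ∫ t in φ ⁻¹' Iio c', g t ∂ρ) (𝓝[<] c)
      (𝓝 (∫ t in φ ⁻¹' Iio c, g t ∂ρ)) := by
  simp_rw [← integral_indicator (hφ measurableSet_Iio)]
  refine tendsto_integral_filter_of_dominated_convergence (fun t => ‖g t‖)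
    (Eventually.of_forall fun c' =>
      (hg.indicator (hφ measurableSet_Iio)).aestronglyMeasurable)
    (Eventually.of_forall fun c' => Eventually.of_forall fun t => norm_indicator_le_norm_self _ _)
    hg.norm (Eventually.of_forall fun t => ?_)
  by_cases ht : φ t < c
  · refine tendsto_const_nhds.congr' ?_
    filter_upwards [(tendsto_nhdsWithin_of_tendsto_nhds tendsto_id).eventually
      (eventually_gt_nhds ht)] with c' (hc' : φ t < c')
    rw [indicator_of_mem (show t ∈ φ ⁻¹' Iio c' from hc'),
      indicator_of_mem (show t ∈ φ ⁻¹' Iio c from ht)]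
  · refine tendsto_const_nhds.congr' ?_
    filter_upwards [self_mem_nhdsWithin] with c' (hc' : c' < c)
    rw [indicator_of_notMem (show t ∉ φ ⁻¹' Iio c' from fun h => ht (h.trans hc')),
      indicator_of_notMem (show t ∉ φ ⁻¹' Iio c from ht)]

theorem eq_of_forall_rat_eq_of_tendsto_nhdsLT {E : Type*} [TopologicalSpace E] [T2Space E]
    {F G : ℝ → E} (hF : ∀ c, Tendsto F (𝓝[<] c) (𝓝 (F c)))
    (hG : ∀ c, Tendsto G (𝓝[<] c) (𝓝 (G c))) (hFG : ∀ q : ℚ, F q = G q) : F = G := by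
  funext c
  refine tendsto_nhds_unique_of_frequently_eq (hF c) (hG c) ?_
  rw [(nhdsLT_basis c).frequently_iff]
  intro b hb
  obtain ⟨q, hbq, hqc⟩ := exists_rat_btwn hb
  exact ⟨q, ⟨hbq, hqc⟩, hFG q⟩

theorem setIntegral_Iio_restrict_Icc_eq_intervalIntegral {f : ℝ → ℝ} {a b c : ℝ}
    (hc : c ∈ Icc a b) :
    ∫ v in Iio c, f v ∂volume.restrict (Icc a b) = ∫ v in a..c, f v := by
  have hinter : Iio c ∩ Icc a b = Ico a c := by
    ext v
    simp only [mem_inter_iff, mem_Iio, mem_Icc, mem_Ico]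
    constructor
    · rintro ⟨hvc, hv0, -⟩; exact ⟨hv0, hvc⟩
    · rintro ⟨hv0, hvc⟩; exact ⟨hvc, hv0, hvc.le.trans hc.2⟩
  rw [Measure.restrict_restrict measurableSet_Iio, hinter, integral_Ico_eq_integral_Ioo,
    ← integral_Ioc_eq_integral_Ioo, intervalIntegral.integral_of_le hc.1]

theorem setIntegral_condDistrib_fst_ae_eq_setIntegral_condDistrib
    {Ω α β : Type*} [MeasurableSpace Ω] [MeasurableSpace α] [MeasurableSpace β]
    [StandardBorelSpace β] [Nonempty β] {P : Measure Ω} [IsFiniteMeasure P]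
    {X : Ω → α} {V : Ω → β} {Y : Ω → ℝ} {e : α × β → ℝ}
    (hX : Measurable X) (hV : Measurable V) (hYint : Integrable Y P) (he : Measurable e)
    (hYe : P[Y | MeasurableSpace.comap (fun ω => (X ω, V ω)) inferInstance]
      =ᵐ[P] fun ω => e (X ω, V ω))
    {s : Set β} (hs : MeasurableSet s) :
    (fun ω => ∫ t in Prod.snd ⁻¹' s, t.1 ∂condDistrib (fun ω => (Y ω, V ω)) X P (X ω))
      =ᵐ[P] fun ω => ∫ v in s, e (X ω, v) ∂condDistrib V X P (X ω) := by
  have hXV : Measurable fun ω => (X ω, V ω) := hX.prodMk hV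
  set mX := MeasurableSpace.comap X inferInstance
  set mXV := MeasurableSpace.comap (fun ω => (X ω, V ω)) inferInstance
  have hmX : mX ≤ mXV := by
    rintro _ ⟨B, hB, rfl⟩
    exact ⟨B ×ˢ univ, hB.prod MeasurableSet.univ, by ext; simp⟩
  have hVs : MeasurableSet[mXV] (V ⁻¹' s) :=
    ⟨univ ×ˢ s, MeasurableSet.univ.prod hs, by ext; simp⟩
  have heint : Integrable (fun ω => e (X ω, V ω)) P := integrable_condExp.congr hYe
  have hleft : P[(V ⁻¹' s).indicator Y | mX]
      =ᵐ[P] fun ω => ∫ t in Prod.snd ⁻¹' s, t.1 ∂condDistrib (fun ω => (Y ω, V ω)) X P (X ω) := by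
    simp_rw [← integral_indicator (measurable_snd hs)]
    exact condExp_prod_ae_eq_integral_condDistrib (f := fun p : α × ℝ × β =>
        (Prod.snd ⁻¹' s).indicator Prod.fst p.2) hX (hYint.aemeasurable.prodMk hV.aemeasurable)
      ((measurable_fst.indicator (measurable_snd hs)).comp measurable_snd).stronglyMeasurable
      (hYint.indicator (hV hs))
  have hright : P[(V ⁻¹' s).indicator (fun ω => e (X ω, V ω)) | mX]
      =ᵐ[P] fun ω => ∫ v in s, e (X ω, v) ∂condDistrib V X P (X ω) := by
    simp_rw [← integral_indicator hs]
    exact condExp_prod_ae_eq_integral_condDistrib (f := fun p : α × β =>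
        s.indicator (fun v => e (p.1, v)) p.2) hX hV.aemeasurable
      (he.indicator (measurable_snd hs)).stronglyMeasurable (heint.indicator (hV hs))
  calc (fun ω => ∫ t in Prod.snd ⁻¹' s, t.1 ∂condDistrib (fun ω => (Y ω, V ω)) X P (X ω))
      =ᵐ[P] P[(V ⁻¹' s).indicator Y | mX] := hleft.symm
    _ =ᵐ[P] P[P[(V ⁻¹' s).indicator Y | mXV] | mX] :=
      (condExp_condExp_of_le hmX hXV.comap_le).symm
    _ =ᵐ[P] P[(V ⁻¹' s).indicator (P[Y | mXV]) | mX] :=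
      condExp_congr_ae (condExp_indicator hYint hVs)
    _ =ᵐ[P] P[(V ⁻¹' s).indicator (fun ω => e (X ω, V ω)) | mX] :=
      condExp_congr_ae hYe.indicator
    _ =ᵐ[P] _ := hright

theorem ae_forall_setIntegral_condDistrib_fst_Iio_eq
    {Ω α : Type*} [MeasurableSpace Ω] [MeasurableSpace α] {P : Measure Ω} [IsFiniteMeasure P]
    {X : Ω → α} {V Y : Ω → ℝ} {e : α × ℝ → ℝ}
    (hX : Measurable X) (hV : Measurable V) (hYint : Integrable Y P) (he : Measurable e)
    (hYe : P[Y | MeasurableSpace.comap (fun ω => (X ω, V ω)) inferInstance]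
      =ᵐ[P] fun ω => e (X ω, V ω)) :
    ∀ᵐ ω ∂P, ∀ c : ℝ,
      ∫ t in Prod.snd ⁻¹' Iio c, t.1 ∂condDistrib (fun ω => (Y ω, V ω)) X P (X ω)
        = ∫ v in Iio c, e (X ω, v) ∂condDistrib V X P (X ω) := by
  have hrat := ae_all_iff.2 fun q : ℚ =>
    setIntegral_condDistrib_fst_ae_eq_setIntegral_condDistrib hX hV hYint he hYe
      (measurableSet_Iio (a := (q : ℝ)))
  have hYκ : ∀ᵐ ω ∂P, Integrable (fun t : ℝ × ℝ => t.1)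
      (condDistrib (fun ω => (Y ω, V ω)) X P (X ω)) :=
    Integrable.condDistrib_ae (f := fun p : α × ℝ × ℝ => p.2.1) hX.aemeasurable
      (hYint.aemeasurable.prodMk hV.aemeasurable)
      ((integrable_map_measure measurable_snd.fst.aestronglyMeasurable
        (hX.aemeasurable.prodMk (hYint.aemeasurable.prodMk hV.aemeasurable))).2 hYint)
  have heμ : ∀ᵐ ω ∂P, Integrable (fun v => e (X ω, v)) (condDistrib V X P (X ω)) :=
    Integrable.condDistrib_ae hX.aemeasurable hV.aemeasurable
      ((integrable_map_measure he.aestronglyMeasurable (hX.prodMk hV).aemeasurable).2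
        (integrable_condExp.congr hYe))
  filter_upwards [hrat, hYκ, heμ] with ω hq hYω heω
  refine congrFun (eq_of_forall_rat_eq_of_tendsto_nhdsLT
    (fun c => tendsto_setIntegral_preimage_Iio_nhdsLT measurable_snd hYω c)
    (fun c => ?_) hq)
  simpa using tendsto_setIntegral_preimage_Iio_nhdsLT measurable_id heω c

theorem roy_condexp_treated_contribution_general
    {Ω : Type*} [MeasurableSpace Ω] [StandardBorelSpace Ω] [Nonempty Ω]
    (P : Measure Ω) [IsProbabilityMeasure P]
    {k : ℕ} (X : Ω → (Fin k → ℝ)) (Z V Y0 Y1 : Ω → ℝ)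
    (hX : Measurable X) (hZ : Measurable Z) (hV : Measurable V)
    (hY1m : Measurable Y1)
    (hY1int : Integrable Y1 P)
    (pi : (Fin k → ℝ) × ℝ → ℝ) (hpi : Measurable pi)
    (hpi01 : ∀ q, pi q ∈ Set.Icc (0:ℝ) 1)
    (A : Ω → ℝ) (hA : A = fun ω => if pi (X ω, Z ω) > V ω then (1:ℝ) else 0)
    (hCI : CondIndepFun (MeasurableSpace.comap X inferInstance) hX.comap_le Z
      (fun ω => (Y0 ω, Y1 ω, V ω)) P)
    (hUnif : ∀ᵐ x ∂(P.map X),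
      condDistrib V X P x = volume.restrict (Set.Icc (0:ℝ) 1))
    (e1 : (Fin k → ℝ) × ℝ → ℝ) (he1m : Measurable e1)
    (he1 : P[Y1 | MeasurableSpace.comap (fun ω => (X ω, V ω)) inferInstance]
      =ᵐ[P] fun ω => e1 (X ω, V ω)) :
    P[(fun ω => A ω * Y1 ω) | MeasurableSpace.comap (fun ω => (X ω, Z ω)) inferInstance]
      =ᵐ[P] fun ω => ∫ v in (0:ℝ)..(pi (X ω, Z ω)), e1 (X ω, v) := by
  have hW : Measurable fun ω => (X ω, Z ω) := hX.prodMk hZ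
  have hT : Measurable fun ω => (Y1 ω, V ω) := hY1m.prodMk hV
  have hkernel := (condIndepFun_iff_condDistrib_prod_ae_eq_prodMkRight hT hZ hX).1
    (hCI.comp measurable_id measurable_snd)
  have hAY1 : (fun ω => A ω * Y1 ω) = fun ω =>
      (Prod.snd ⁻¹' Iio (pi (X ω, Z ω))).indicator Prod.fst (Y1 ω, V ω) := by
    ext ω
    by_cases h : V ω < pi (X ω, Z ω) <;> simp [hA, h]
  rw [hAY1]
  calc _ =ᵐ[P] fun ω => ∫ t, (Prod.snd ⁻¹' Iio (pi (X ω, Z ω))).indicator Prod.fst t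
        ∂condDistrib (fun ω => (Y1 ω, V ω)) (fun ω => (X ω, Z ω)) P (X ω, Z ω) :=
        condExp_prod_ae_eq_integral_condDistrib (f := fun p : ((Fin k → ℝ) × ℝ) × ℝ × ℝ =>
            (Prod.snd ⁻¹' Iio (pi p.1)).indicator Prod.fst p.2) hW hT.aemeasurable
          (measurable_snd.fst.indicator
            (measurableSet_lt measurable_snd.snd (hpi.comp measurable_fst))).stronglyMeasurable
          (hY1int.indicator (measurableSet_lt hV (hpi.comp hW)))
    _ =ᵐ[P] fun ω => ∫ t in Prod.snd ⁻¹' Iio (pi (X ω, Z ω)), t.1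
        ∂condDistrib (fun ω => (Y1 ω, V ω)) X P (X ω) := by
      filter_upwards [ae_of_ae_map hW.aemeasurable hkernel] with ω hω
      rw [hω, Kernel.prodMkRight_apply, integral_indicator (measurable_snd measurableSet_Iio)]
    _ =ᵐ[P] fun ω => ∫ v in Iio (pi (X ω, Z ω)), e1 (X ω, v) ∂condDistrib V X P (X ω) := by
      filter_upwards [ae_forall_setIntegral_condDistrib_fst_Iio_eq hX hV hY1int he1m he1]
        with ω hω
      exact hω _
    _ =ᵐ[P] _ := by
      filter_upwards [ae_of_ae_map hX.aemeasurable hUnif] with ω hω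
      rw [hω, setIntegral_Iio_restrict_Icc_eq_intervalIntegral (hpi01 _)]

/-- Under the generalized Roy model,
`E[A·Y₁ | σ(X,Z)] = ∫₀^{π(X,Z)} e₁(X, v) dv` `P`-almost surely. -/
theorem roy_condexp_treated_contribution
    {Ω : Type*} [MeasurableSpace Ω] [StandardBorelSpace Ω] [Nonempty Ω]
    (P : Measure Ω) [IsProbabilityMeasure P]
    {k : ℕ} (X : Ω → (Fin k → ℝ)) (Z V Y0 Y1 : Ω → ℝ)
    (hX : Measurable X) (hZ : Measurable Z) (hV : Measurable V)
    (hY0m : Measurable Y0) (hY1m : Measurable Y1)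
    (hY0int : Integrable Y0 P) (hY1int : Integrable Y1 P)
    (pi : (Fin k → ℝ) × ℝ → ℝ) (hpi : Measurable pi)
    (hpi01 : ∀ q, pi q ∈ Set.Icc (0:ℝ) 1)
    (A : Ω → ℝ) (hA : A = fun ω => if pi (X ω, Z ω) > V ω then (1:ℝ) else 0)
    (Y : Ω → ℝ) (hY : Y = fun ω => A ω * Y1 ω + (1 - A ω) * Y0 ω)
    (hCI : CondIndepFun (MeasurableSpace.comap X inferInstance) hX.comap_le Z
      (fun ω => (Y0 ω, Y1 ω, V ω)) P)
    (hUnif : ∀ᵐ x ∂(P.map X),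
      condDistrib V X P x = volume.restrict (Set.Icc (0:ℝ) 1))
    (e1 : (Fin k → ℝ) × ℝ → ℝ) (he1m : Measurable e1)
    (he1 : P[Y1 | MeasurableSpace.comap (fun ω => (X ω, V ω)) inferInstance]
      =ᵐ[P] fun ω => e1 (X ω, V ω))
    (hAY1 : Integrable (fun ω => A ω * Y1 ω) P) :
    P[(fun ω => A ω * Y1 ω) | MeasurableSpace.comap (fun ω => (X ω, Z ω)) inferInstance]
      =ᵐ[P] fun ω => ∫ v in (0:ℝ)..(pi (X ω, Z ω)), e1 (X ω, v) :=
  roy_condexp_treated_contribution_general P X Z V Y0 Y1 hX hZ hV hY1m hY1int pi hpi hpi01 A hA hCI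
    hUnif e1 he1m he1
end

section
/- (Equation (4).) Under the generalized Roy model with the linear outcome model, the conditional mean of the observed outcome given covariates and instrument is the quadratic polynomial in the propensity score: P-almost surely, E[Y | σ(X,Z)] = α₀ + β₀ᵀX + (α₁ − α₀ − 0.5(ζ₁ − ζ₀))·π(X,Z) + (β₁ − β₀)ᵀX·π(X,Z) + 0.5(ζ₁ − ζ₀)·π(X,Z)²; that is, m(x,p) = r(x,p)ᵀγ with r(x,p) = (1, x, p, xp, p²) and γ = (α₀, β₀, α₁−α₀−0.5(ζ₁−ζ₀), β₁−β₀, 0.5(ζ₁−ζ₀)). -/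
open MeasureTheory ProbabilityTheory Set

/-!
Condition first on `(X, Z, V)`. Since `Z` is conditionally independent of `W = (Y₀, Y₁, V)`
given `X`, we have `P[Z ∈ B | X, W] = P[Z ∈ B | X]`, and from this, adding `Z` to `(X, V)` does
not change the conditional mean of `Y₀` or `Y₁`. Treatment is `(X, Z, V)`-measurable, so
`E[Y | X, Z, V]` is `e₁(X, V)` on `{V < π(X, Z)}` and `e₀(X, V)` off it. The same independence
makes `V` uniform on `[0, 1]` given `(X, Z)`, hence
`E[Y | X, Z] = ∫₀^π e₁(X, v) dv + ∫_π^1 e₀(X, v) dv`, a quadratic polynomial in `π = π(X, Z)`.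
-/

namespace MeasureTheory

variable {Ω : Type*} {m₀ : MeasurableSpace Ω} {μ : Measure Ω}

lemma isPiSystem_inter_measurableSet (m₁ m₂ : MeasurableSpace Ω) :
    IsPiSystem (image2 (· ∩ ·) {s | MeasurableSet[m₁] s} {t | MeasurableSet[m₂] t}) := by
  rintro _ ⟨s, hs, t, ht, rfl⟩ _ ⟨s', hs', t', ht', rfl⟩ -
  exact ⟨s ∩ s', hs.inter hs', t ∩ t', ht.inter ht', inter_inter_inter_comm s s' t t'⟩

lemma generateFrom_inter_measurableSet (m₁ m₂ : MeasurableSpace Ω) :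
    MeasurableSpace.generateFrom
      (image2 (· ∩ ·) {s | MeasurableSet[m₁] s} {t | MeasurableSet[m₂] t}) = m₁ ⊔ m₂ := by
  refine le_antisymm (MeasurableSpace.generateFrom_le ?_) (sup_le (fun s hs => ?_) fun t ht => ?_)
  · rintro _ ⟨s, hs, t, ht, rfl⟩
    exact (le_sup_left (a := m₁) (b := m₂) s hs).inter (le_sup_right (a := m₁) (b := m₂) t ht)
  · exact MeasurableSpace.measurableSet_generateFrom ⟨s, hs, univ, MeasurableSet.univ, inter_univ s⟩
  · exact MeasurableSpace.measurableSet_generateFrom ⟨univ, MeasurableSet.univ, t, ht, univ_inter t⟩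

lemma ae_eq_condExp_sup_of_forall_setIntegral_inter_eq [IsFiniteMeasure μ]
    {m₁ m₂ : MeasurableSpace Ω} (hm₁ : m₁ ≤ m₀) (hm₂ : m₂ ≤ m₀) {f g : Ω → ℝ}
    (hf : Integrable f μ) (hg : Integrable g μ) (hgm : StronglyMeasurable[m₁ ⊔ m₂] g)
    (h : ∀ s t, MeasurableSet[m₁] s → MeasurableSet[m₂] t →
      ∫ x in s ∩ t, g x ∂μ = ∫ x in s ∩ t, f x ∂μ) :
    g =ᵐ[μ] μ[f | m₁ ⊔ m₂] := by
  have hm : m₁ ⊔ m₂ ≤ m₀ := sup_le hm₁ hm₂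
  suffices ∀ s, MeasurableSet[m₁ ⊔ m₂] s → ∫ x in s, g x ∂μ = ∫ x in s, f x ∂μ from
    ae_eq_condExp_of_forall_setIntegral_eq hm hf (fun s _ _ => hg.integrableOn)
      (fun s hs _ => this s hs) hgm.aestronglyMeasurable
  intro s hs
  induction s, hs using MeasurableSpace.induction_on_inter
    (generateFrom_inter_measurableSet m₁ m₂).symm (isPiSystem_inter_measurableSet m₁ m₂) with
  | empty => simp
  | basic _ hst =>
    obtain ⟨s, hs, t, ht, rfl⟩ := hst
    exact h s t hs ht
  | compl s hs hgf =>
    have huniv := h univ univ MeasurableSet.univ MeasurableSet.univ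
    rw [univ_inter, setIntegral_univ, setIntegral_univ] at huniv
    have hg' := integral_add_compl (hm s hs) hg
    have hf' := integral_add_compl (hm s hs) hf
    linarith
  | iUnion u hdisj hu hgf =>
    rw [integral_iUnion (fun i => hm _ (hu i)) hdisj hg.integrableOn,
      integral_iUnion (fun i => hm _ (hu i)) hdisj hf.integrableOn]
    exact tsum_congr hgf

lemma integral_mul_condExp {m : MeasurableSpace Ω} (hm : m ≤ m₀) [SigmaFinite (μ.trim hm)]
    {φ f : Ω → ℝ} (hφ : StronglyMeasurable[m] φ) (hφf : Integrable (φ * f) μ)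
    (hf : Integrable f μ) :
    ∫ x, (φ * f) x ∂μ = ∫ x, (φ * μ[f | m]) x ∂μ := by
  rw [← integral_condExp hm]
  exact integral_congr_ae (condExp_mul_of_stronglyMeasurable_left hφ hφf hf)

lemma mul_indicator_one_eq_indicator {M : Type*} [MulZeroOneClass M] (f : Ω → M) (t : Set Ω) :
    (f * t.indicator fun _ => 1) = t.indicator f := by
  ext x
  by_cases hx : x ∈ t <;> simp [hx]

section CondIndep

variable [StandardBorelSpace Ω] [IsFiniteMeasure μ] {m' m₁ m₂ : MeasurableSpace Ω}

theorem condExp_indicator_sup_ae_eq_of_condIndep (hm' : m' ≤ m₀) (hm₁ : m₁ ≤ m₀)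
    (hm₂ : m₂ ≤ m₀) (hind : CondIndep m' m₁ m₂ hm' μ) {B : Set Ω}
    (hB : MeasurableSet[m₁] B) :
    μ⟦B | m' ⊔ m₂⟧ =ᵐ[μ] μ⟦B | m'⟧ := by
  refine (ae_eq_condExp_sup_of_forall_setIntegral_inter_eq hm' hm₂
    ((integrable_const (1 : ℝ)).indicator (hm₁ _ hB)) integrable_condExp
    (stronglyMeasurable_condExp.mono le_sup_left) fun s t hs ht => ?_).symm
  have hmul := (condIndep_iff m' m₁ m₂ hm' hm₁ hm₂ μ).1 hind B t hB ht
  have ht₀ := hm₂ _ ht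
  have hint : Integrable (μ⟦B | m'⟧ * t.indicator fun _ => (1 : ℝ)) μ := by
    rw [mul_indicator_one_eq_indicator]
    exact integrable_condExp.indicator ht₀
  calc ∫ x in s ∩ t, (μ⟦B | m'⟧) x ∂μ
      = ∫ x in s, (μ⟦B | m'⟧ * t.indicator fun _ => (1 : ℝ)) x ∂μ := by
        rw [mul_indicator_one_eq_indicator, setIntegral_indicator ht₀]
    _ = ∫ x in s, (μ⟦B | m'⟧ * μ⟦t | m'⟧) x ∂μ := by
        rw [← setIntegral_condExp hm' hint hs]
        exact setIntegral_congr_ae (hm' _ hs) ((condExp_mul_of_stronglyMeasurable_left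
          stronglyMeasurable_condExp hint ((integrable_const (1 : ℝ)).indicator ht₀)).mono
          fun x hx _ => hx)
    _ = ∫ x in s, (μ⟦B ∩ t | m'⟧) x ∂μ :=
        setIntegral_congr_ae (hm' _ hs) (hmul.mono fun x hx _ => hx.symm)
    _ = ∫ x in s ∩ t, B.indicator (fun _ => (1 : ℝ)) x ∂μ := by
        rw [setIntegral_condExp hm'
          ((integrable_const (1 : ℝ)).indicator ((hm₁ _ hB).inter ht₀)) hs,
          ← setIntegral_indicator ht₀, indicator_indicator, inter_comm]

theorem condExp_sup_ae_eq_of_condIndep {m₃ : MeasurableSpace Ω} (hm' : m' ≤ m₀)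
    (hm₁ : m₁ ≤ m₀) (hm₂ : m₂ ≤ m₀) (hind : CondIndep m' m₁ m₂ hm' μ) (hm'₃ : m' ≤ m₃)
    (hm₃ : m₃ ≤ m' ⊔ m₂) {f : Ω → ℝ} (hfm : StronglyMeasurable[m' ⊔ m₂] f)
    (hf : Integrable f μ) :
    μ[f | m₃ ⊔ m₁] =ᵐ[μ] μ[f | m₃] := by
  have hm'₂ : m' ⊔ m₂ ≤ m₀ := sup_le hm' hm₂
  have hm₃₀ : m₃ ≤ m₀ := hm₃.trans hm'₂
  have hbdd : ∀ s t : Set Ω, ∀ᵐ x ∂μ, ‖s.indicator (μ⟦t | m'⟧) x‖ ≤ 1 := fun s t => by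
    filter_upwards [ae_bdd_abs_condExp_of_ae_bdd_abs (m := m') (R := (1 : ℝ))
      (f := t.indicator fun _ => (1 : ℝ))
      (Filter.Eventually.of_forall fun x => by by_cases hx : x ∈ t <;> simp [hx])] with x hx
    exact (norm_indicator_le_norm_self _ x).trans hx
  -- an (m' ⊔ m₂)-measurable function sees a set of m₁ only through its conditional probability
  have key : ∀ s t, MeasurableSet[m₃] s → MeasurableSet[m₁] t → ∀ g : Ω → ℝ,
      StronglyMeasurable[m' ⊔ m₂] g → Integrable g μ →
      ∫ x in s ∩ t, g x ∂μ = ∫ x, (s.indicator (μ⟦t | m'⟧) * g) x ∂μ := by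
    intro s t hs ht g hgm hg
    have hs₀ := hm₃₀ _ hs
    have ht₀ := hm₁ _ ht
    calc ∫ x in s ∩ t, g x ∂μ
        = ∫ x, (s.indicator g * t.indicator fun _ => (1 : ℝ)) x ∂μ := by
          rw [mul_indicator_one_eq_indicator, indicator_indicator,
            integral_indicator (ht₀.inter hs₀), inter_comm]
      _ = ∫ x, (s.indicator g * μ⟦t | m' ⊔ m₂⟧) x ∂μ := by
          refine integral_mul_condExp hm'₂ (hgm.indicator (hm₃ _ hs)) ?_
            ((integrable_const (1 : ℝ)).indicator ht₀)
          rw [mul_indicator_one_eq_indicator]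
          exact (hg.indicator hs₀).indicator ht₀
      _ = ∫ x, (s.indicator (μ⟦t | m'⟧) * g) x ∂μ := by
          refine integral_congr_ae ?_
          filter_upwards [condExp_indicator_sup_ae_eq_of_condIndep hm' hm₁ hm₂ hind ht]
            with x hx
          by_cases hxs : x ∈ s <;> simp [hxs, hx, mul_comm]
  refine (ae_eq_condExp_sup_of_forall_setIntegral_inter_eq hm₃₀ hm₁ hf integrable_condExp
    (stronglyMeasurable_condExp.mono le_sup_left) fun s t hs ht => ?_).symm
  rw [key s t hs ht _ (stronglyMeasurable_condExp.mono hm₃) integrable_condExp,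
    key s t hs ht f hfm hf]
  exact (integral_mul_condExp hm₃₀ ((stronglyMeasurable_condExp.mono hm'₃).indicator hs)
    (hf.bdd_mul ((stronglyMeasurable_condExp.mono hm').indicator
      (hm₃₀ _ hs)).aestronglyMeasurable (hbdd s t)) hf).symm

end CondIndep

theorem condExp_piecewise {m : MeasurableSpace Ω} (hm : m ≤ m₀) {s : Set Ω}
    [DecidablePred (· ∈ s)] (hs : MeasurableSet[m] s) {f g : Ω → ℝ} (hf : Integrable f μ)
    (hg : Integrable g μ) :
    μ[s.piecewise f g | m] =ᵐ[μ] s.piecewise (μ[f | m]) (μ[g | m]) := by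
  rw [← indicator_add_compl_eq_piecewise, ← indicator_add_compl_eq_piecewise]
  exact (condExp_add (hf.indicator (hm _ hs)) (hg.indicator (hm _ hs).compl) m).trans
    ((condExp_indicator hf hs).add (condExp_indicator hg hs.compl))

end MeasureTheory

namespace ProbabilityTheory

theorem condDistrib_prodMk_ae_eq_of_condIndepFun {Ω β γ δ : Type*} {mΩ : MeasurableSpace Ω}
    [StandardBorelSpace Ω] {μ : Measure Ω} [IsFiniteMeasure μ] [MeasurableSpace β]
    [StandardBorelSpace β] [Nonempty β] [MeasurableSpace γ] [StandardBorelSpace γ] [Nonempty γ]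
    [MeasurableSpace δ] {V : Ω → β} {Z : Ω → γ} {X : Ω → δ} (hV : Measurable V)
    (hZ : Measurable Z) (hX : Measurable X) (h : Z ⟂ᵢ[X, hX; μ] V) :
    ∀ᵐ ω ∂μ, condDistrib V (fun ω => (X ω, Z ω)) μ (X ω, Z ω) = condDistrib V X μ (X ω) := by
  filter_upwards [ae_of_ae_map (hX.prodMk hZ).aemeasurable
    ((condIndepFun_iff_condDistrib_prod_ae_eq_prodMkRight hV hZ hX).1 h)] with ω hω
  rw [hω, Kernel.prodMkRight_apply]

theorem condExp_comap_prodMk_ae_eq_of_condIndepFun {Ω α β γ δ : Type*} {mΩ : MeasurableSpace Ω}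
    [StandardBorelSpace Ω] {μ : Measure Ω} [IsFiniteMeasure μ] {mα : MeasurableSpace α}
    {mβ : MeasurableSpace β} {mγ : MeasurableSpace γ} {mδ : MeasurableSpace δ} {X : Ω → α}
    {Z : Ω → β} {W : Ω → γ} {V : Ω → δ} (hX : Measurable X) (hZ : Measurable Z)
    (hW : Measurable W) (hCI : Z ⟂ᵢ[X, hX; μ] W) (hV : Measurable[mγ.comap W] V) {f : Ω → ℝ}
    (hf : StronglyMeasurable[mγ.comap W] f) (hfi : Integrable f μ) :
    μ[f | ((mα.prod mβ).prod mδ).comap fun ω => ((X ω, Z ω), V ω)]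
      =ᵐ[μ] μ[f | (mα.prod mδ).comap fun ω => (X ω, V ω)] := by
  have hsup : ((mα.prod mβ).prod mδ).comap (fun ω => ((X ω, Z ω), V ω))
      = (mα.prod mδ).comap (fun ω => (X ω, V ω)) ⊔ mβ.comap Z := by
    simp only [MeasurableSpace.comap_prodMk]
    exact sup_right_comm _ _ _
  rw [hsup, MeasurableSpace.comap_prodMk]
  exact condExp_sup_ae_eq_of_condIndep hX.comap_le hZ.comap_le hW.comap_le
    ((condIndepFun_iff_condIndep _ _ _ _ _).1 hCI) le_sup_left
    (sup_le_sup_left hV.comap_le _) (hf.mono le_sup_right) hfi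

theorem condExp_ae_eq_integral_of_condExp_prodMk_ae_eq {Ω α β : Type*} {mΩ : MeasurableSpace Ω}
    {μ : Measure Ω} [IsFiniteMeasure μ] {mα : MeasurableSpace α} {mβ : MeasurableSpace β}
    [StandardBorelSpace β] [Nonempty β] {T : Ω → α} {V : Ω → β} (hT : Measurable T)
    (hV : Measurable V) {Y : Ω → ℝ} {g : α × β → ℝ} (hg : Measurable g)
    (hY : μ[Y | (mα.prod mβ).comap fun ω => (T ω, V ω)] =ᵐ[μ] fun ω => g (T ω, V ω))
    {ν : Measure β} (hν : ∀ᵐ ω ∂μ, condDistrib V T μ (T ω) = ν) :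
    μ[Y | mα.comap T] =ᵐ[μ] fun ω => ∫ v, g (T ω, v) ∂ν := by
  have hle : mα.comap T ≤ (mα.prod mβ).comap fun ω => (T ω, V ω) := by
    rw [MeasurableSpace.comap_prodMk]
    exact le_sup_left
  filter_upwards [(condExp_condExp_of_le hle (hT.prodMk hV).comap_le).symm.trans
    ((condExp_congr_ae hY).trans (condExp_prod_ae_eq_integral_condDistrib hT hV.aemeasurable
      hg.stronglyMeasurable (integrable_condExp.congr hY))), hν] with ω hω hων
  rw [hω, hων]

end ProbabilityTheory

theorem setIntegral_Icc_ite_lt_affine {p : ℝ} (hp : p ∈ Icc (0 : ℝ) 1) (a₀ b₀ a₁ b₁ : ℝ) :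
    ∫ v in Icc (0 : ℝ) 1, (if v < p then a₁ + b₁ * v else a₀ + b₀ * v) =
      a₁ * p + b₁ * p ^ 2 / 2 + a₀ * (1 - p) + b₀ * (1 - p ^ 2) / 2 := by
  have hint : ∀ a b : ℝ, ∀ s, IntegrableOn (fun v : ℝ => a + b * v) s (volume.restrict (Icc 0 1)) :=
    fun a b s => Integrable.integrableOn
      (by fun_prop : Continuous fun v : ℝ => a + b * v).integrableOn_Icc
  have haffine : ∀ a b x y : ℝ, x ≤ y →
      ∫ v in Ioc x y, (a + b * v) = a * (y - x) + b * (y ^ 2 - x ^ 2) / 2 := by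
    intro a b x y hxy
    rw [← intervalIntegral.integral_of_le hxy, intervalIntegral.integral_add
      intervalIntegrable_const (intervalIntegral.intervalIntegrable_id.const_mul b),
      intervalIntegral.integral_const_mul, integral_id]
    simp; ring
  have hlow : Iio p ∩ Icc 0 1 = Ico 0 p := by
    ext v
    simp only [mem_inter_iff, mem_Iio, mem_Icc, mem_Ico]
    exact ⟨fun ⟨h1, h2, _⟩ => ⟨h2, h1⟩, fun ⟨h1, h2⟩ => ⟨h2, h1, h2.le.trans hp.2⟩⟩
  have hupp : (Iio p)ᶜ ∩ Icc 0 1 = Icc p 1 := by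
    ext v
    simp only [mem_inter_iff, mem_compl_iff, mem_Iio, not_lt, mem_Icc]
    exact ⟨fun ⟨h1, _, h3⟩ => ⟨h1, h3⟩, fun ⟨h1, h2⟩ => ⟨h1, hp.1.trans h1, h2⟩⟩
  change ∫ v, (Iio p).piecewise (fun v => a₁ + b₁ * v) (fun v => a₀ + b₀ * v) v
    ∂(volume.restrict (Icc 0 1)) = _
  rw [integral_piecewise measurableSet_Iio (hint _ _ _) (hint _ _ _),
    Measure.restrict_restrict measurableSet_Iio, Measure.restrict_restrict measurableSet_Iio.compl,
    hlow, hupp, setIntegral_congr_set Ico_ae_eq_Ioc, integral_Icc_eq_integral_Ioc,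
    haffine _ _ _ _ hp.1, haffine _ _ _ _ hp.2]
  ring

theorem roy_observed_mean_quadratic_general
    {Ω : Type*} [MeasurableSpace Ω] [StandardBorelSpace Ω]
    (P : Measure Ω) [IsProbabilityMeasure P]
    {k : ℕ} (X : Ω → (Fin k → ℝ)) (Z V Y0 Y1 : Ω → ℝ)
    (hX : Measurable X) (hZ : Measurable Z) (hV : Measurable V)
    (hY0m : Measurable Y0) (hY1m : Measurable Y1)
    (hY0int : Integrable Y0 P) (hY1int : Integrable Y1 P)
    (pi : (Fin k → ℝ) × ℝ → ℝ) (hpi : Measurable pi)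
    (hpi01 : ∀ q, pi q ∈ Set.Icc (0:ℝ) 1)
    (A : Ω → ℝ) (hA : A = fun ω => if pi (X ω, Z ω) > V ω then (1:ℝ) else 0)
    (Y : Ω → ℝ) (hY : Y = fun ω => A ω * Y1 ω + (1 - A ω) * Y0 ω)
    (hCI : CondIndepFun (MeasurableSpace.comap X inferInstance) hX.comap_le Z
      (fun ω => (Y0 ω, Y1 ω, V ω)) P)
    (hUnif : ∀ᵐ x ∂(P.map X),
      condDistrib V X P x = volume.restrict (Set.Icc (0:ℝ) 1))
    (α0 α1 ζ0 ζ1 : ℝ) (β0 β1 : Fin k → ℝ)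
    (he0 : P[Y0 | MeasurableSpace.comap (fun ω => (X ω, V ω)) inferInstance]
      =ᵐ[P] fun ω => α0 - 0.5 * ζ0 + (∑ i, β0 i * X ω i) + ζ0 * V ω)
    (he1 : P[Y1 | MeasurableSpace.comap (fun ω => (X ω, V ω)) inferInstance]
      =ᵐ[P] fun ω => α1 - 0.5 * ζ1 + (∑ i, β1 i * X ω i) + ζ1 * V ω) :
    P[Y | MeasurableSpace.comap (fun ω => (X ω, Z ω)) inferInstance]
      =ᵐ[P] fun ω =>
        α0 + (∑ i, β0 i * X ω i)
          + (α1 - α0 - 0.5 * (ζ1 - ζ0)) * pi (X ω, Z ω)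
          + (∑ i, (β1 i - β0 i) * X ω i) * pi (X ω, Z ω)
          + 0.5 * (ζ1 - ζ0) * (pi (X ω, Z ω)) ^ 2 := by
  classical
  have hT : Measurable fun ω => (X ω, Z ω) := hX.prodMk hZ
  have hW : Measurable fun ω => (Y0 ω, Y1 ω, V ω) := hY0m.prodMk (hY1m.prodMk hV)
  have hWm := comap_measurable (m := inferInstance) fun ω => (Y0 ω, Y1 ω, V ω)
  have hS : MeasurableSet {q : ((Fin k → ℝ) × ℝ) × ℝ | q.2 < pi q.1} :=
    measurableSet_lt measurable_snd (hpi.comp measurable_fst)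
  let g : ((Fin k → ℝ) × ℝ) × ℝ → ℝ := fun q => if q.2 < pi q.1
    then α1 - 0.5 * ζ1 + (∑ i, β1 i * q.1.1 i) + ζ1 * q.2
    else α0 - 0.5 * ζ0 + (∑ i, β0 i * q.1.1 i) + ζ0 * q.2
  have hYG : P[Y | MeasurableSpace.comap (fun ω => ((X ω, Z ω), V ω)) inferInstance]
      =ᵐ[P] fun ω => g ((X ω, Z ω), V ω) := by
    have h1 : P[Y1 | MeasurableSpace.comap (fun ω => ((X ω, Z ω), V ω)) inferInstance] =ᵐ[P] _ :=
      (condExp_comap_prodMk_ae_eq_of_condIndepFun hX hZ hW hCI (measurable_snd.snd.comp hWm)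
        (measurable_snd.fst.comp hWm).stronglyMeasurable hY1int).trans he1
    have h0 : P[Y0 | MeasurableSpace.comap (fun ω => ((X ω, Z ω), V ω)) inferInstance] =ᵐ[P] _ :=
      (condExp_comap_prodMk_ae_eq_of_condIndepFun hX hZ hW hCI (measurable_snd.snd.comp hWm)
        (measurable_fst.comp hWm).stronglyMeasurable hY0int).trans he0
    have hYS : Y = ((fun ω => ((X ω, Z ω), V ω)) ⁻¹' {q | q.2 < pi q.1}).piecewise Y1 Y0 := by
      ext ω
      by_cases h : V ω < pi (X ω, Z ω) <;> simp [hY, hA, h]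
    rw [hYS]
    refine (condExp_piecewise (hT.prodMk hV).comap_le (comap_measurable _ hS) hY1int
      hY0int).trans ?_
    filter_upwards [h1, h0] with ω hω1 hω0
    by_cases h : V ω < pi (X ω, Z ω) <;> simp [h, hω1, hω0, g]
  have hunif : ∀ᵐ ω ∂P, condDistrib V (fun ω => (X ω, Z ω)) P (X ω, Z ω)
      = volume.restrict (Icc (0 : ℝ) 1) := by
    filter_upwards [condDistrib_prodMk_ae_eq_of_condIndepFun hV hZ hX
      (hCI.comp measurable_id (measurable_snd.comp measurable_snd)),
      ae_of_ae_map hX.aemeasurable hUnif] with ω hω hωX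
    rw [hω, hωX]
  have hg : Measurable g := Measurable.ite hS (by fun_prop) (by fun_prop)
  filter_upwards [condExp_ae_eq_integral_of_condExp_prodMk_ae_eq hT hV hg hYG hunif] with ω hω
  rw [hω, setIntegral_Icc_ite_lt_affine (hpi01 (X ω, Z ω)) (α0 - 0.5 * ζ0 + ∑ i, β0 i * X ω i)
    ζ0 (α1 - 0.5 * ζ1 + ∑ i, β1 i * X ω i) ζ1]
  simp only [sub_mul, Finset.sum_sub_distrib]
  ring

/-- Equation (4): under the generalized Roy model with the linear outcome model, the
conditional mean of the observed outcome is a quadratic polynomial in the propensity score. -/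
theorem roy_observed_mean_quadratic
    {Ω : Type*} [MeasurableSpace Ω] [StandardBorelSpace Ω] [Nonempty Ω]
    (P : Measure Ω) [IsProbabilityMeasure P]
    {k : ℕ} (X : Ω → (Fin k → ℝ)) (Z V Y0 Y1 : Ω → ℝ)
    (hX : Measurable X) (hZ : Measurable Z) (hV : Measurable V)
    (hY0m : Measurable Y0) (hY1m : Measurable Y1)
    (hY0int : Integrable Y0 P) (hY1int : Integrable Y1 P)
    (pi : (Fin k → ℝ) × ℝ → ℝ) (hpi : Measurable pi)
    (hpi01 : ∀ q, pi q ∈ Set.Icc (0:ℝ) 1)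
    (A : Ω → ℝ) (hA : A = fun ω => if pi (X ω, Z ω) > V ω then (1:ℝ) else 0)
    (Y : Ω → ℝ) (hY : Y = fun ω => A ω * Y1 ω + (1 - A ω) * Y0 ω)
    (hCI : CondIndepFun (MeasurableSpace.comap X inferInstance) hX.comap_le Z
      (fun ω => (Y0 ω, Y1 ω, V ω)) P)
    (hUnif : ∀ᵐ x ∂(P.map X),
      condDistrib V X P x = volume.restrict (Set.Icc (0:ℝ) 1))
    (α0 α1 ζ0 ζ1 : ℝ) (β0 β1 : Fin k → ℝ)
    (he0 : P[Y0 | MeasurableSpace.comap (fun ω => (X ω, V ω)) inferInstance]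
      =ᵐ[P] fun ω => α0 - 0.5 * ζ0 + (∑ i, β0 i * X ω i) + ζ0 * V ω)
    (he1 : P[Y1 | MeasurableSpace.comap (fun ω => (X ω, V ω)) inferInstance]
      =ᵐ[P] fun ω => α1 - 0.5 * ζ1 + (∑ i, β1 i * X ω i) + ζ1 * V ω) :
    P[Y | MeasurableSpace.comap (fun ω => (X ω, Z ω)) inferInstance]
      =ᵐ[P] fun ω =>
        α0 + (∑ i, β0 i * X ω i)
          + (α1 - α0 - 0.5 * (ζ1 - ζ0)) * pi (X ω, Z ω)
          + (∑ i, (β1 i - β0 i) * X ω i) * pi (X ω, Z ω)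
          + 0.5 * (ζ1 - ζ0) * (pi (X ω, Z ω)) ^ 2 :=
  roy_observed_mean_quadratic_general P X Z V Y0 Y1 hX hZ hV hY0m hY1m hY0int hY1int pi hpi hpi01 A
    hA Y hY hCI hUnif α0 α1 ζ0 ζ1 β0 β1 he0 he1
end

section
/- (Equation (6), average treatment effect on the treated.) Under the generalized Roy model with the linear outcome model, assuming (Y₁ − Y₀)·A and X·π(X,Z) are integrable, E[(Y₁ − Y₀)·A] = E[(α₁ − α₀ − 0.5(ζ₁ − ζ₀))·π(X,Z) + (β₁ − β₀)ᵀX·π(X,Z) + 0.5(ζ₁ − ζ₀)·π(X,Z)²]. Consequently, if P(A = 1) > 0, the average treatment effect on the treated is E[Y₁ − Y₀ | A = 1] = P(A = 1)⁻¹ · E[(α₁ − α₀ − 0.5(ζ₁ − ζ₀))·π(X,Z) + (β₁ − β₀)ᵀX·π(X,Z) + 0.5(ζ₁ − ζ₀)·π(X,Z)²], where E[· | A = 1] denotes expectation conditional on the event {A = 1}. -/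
/-!
Write `D = Y₁ - Y₀` and `m(x, v) = E[D | X = x, V = v]`. Since `Z` is conditionally independent
of `(Y₀, Y₁, V)` given `X`, the treatment indicator `1{V < π(X, Z)}` can be replaced by its
average `φ(X, V)` over the conditional law of `Z` given `X`; as `φ(X, V)` is `σ(X, V)`-measurable,
the tower property then replaces `D` by `m(X, V)`, and undoing the first step gives
`E[D·A] = E[m(X, V)·1{V < π(X, Z)}]`. Because `V` is uniform on `[0, 1]` given `(X, Z)`, this is
`E[∫₀^{π(X,Z)} m(X, v) dv]`, and for the linear `m` the inner integral is the quadratic in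
`π(X, Z)` of Equation (6). Dividing by `P(A = 1)` gives the ATT.
-/

open MeasureTheory ProbabilityTheory Set

theorem setIntegral_Icc_affine_mul_ite_lt {p : ℝ} (hp : p ∈ Icc (0 : ℝ) 1) (a b : ℝ) :
    ∫ v in Icc (0 : ℝ) 1, (a + b * v) * (if p > v then 1 else 0) = a * p + b * p ^ 2 / 2 := by
  have hind :
      (fun v ↦ (a + b * v) * (if p > v then 1 else 0)) = (Iio p).indicator (a + b * ·) := by
    ext v; by_cases h : v < p <;> simp [indicator, h]
  have hIcc : Iio p ∩ Icc 0 1 = Ico 0 p := by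
    ext v; simp only [mem_inter_iff, mem_Iio, mem_Icc, mem_Ico]
    constructor
    · rintro ⟨h1, h2, -⟩; exact ⟨h2, h1⟩
    · rintro ⟨h1, h2⟩; exact ⟨h2, h1, h2.le.trans hp.2⟩
  rw [hind, integral_indicator measurableSet_Iio, Measure.restrict_restrict measurableSet_Iio,
    hIcc, setIntegral_congr_set Ico_ae_eq_Ioc, ← intervalIntegral.integral_of_le hp.1,
    intervalIntegral.integral_add intervalIntegrable_const
      (intervalIntegral.intervalIntegrable_id.const_mul b),
    intervalIntegral.integral_const, intervalIntegral.integral_const_mul, integral_id, smul_eq_mul]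
  ring

namespace ProbabilityTheory

variable {Ω α β γ E : Type*} [NormedAddCommGroup E] [NormedSpace ℝ E] {mΩ : MeasurableSpace Ω}
  {mα : MeasurableSpace α} {mβ : MeasurableSpace β} {mγ : MeasurableSpace γ} {P : Measure Ω}

theorem integral_cond_eq_inv_mul_integral_indicator {s : Set Ω} (hs : MeasurableSet s)
    (f : Ω → ℝ) : ∫ ω, f ω ∂P[|s] = (P s).toReal⁻¹ * ∫ ω, s.indicator f ω ∂P := by
  rw [ProbabilityTheory.cond, integral_smul_measure, ENNReal.toReal_inv, smul_eq_mul,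
    integral_indicator hs]

variable [IsFiniteMeasure P]

theorem integral_comp_prodMk_of_condDistrib_ae_eq [StandardBorelSpace β] [Nonempty β]
    {W : Ω → α} {U : Ω → β} (hW : Measurable W) (hU : Measurable U) {η : Kernel α β}
    [IsSFiniteKernel η] (hη : condDistrib U W P =ᵐ[P.map W] η) {F : α × β → E}
    (hF : StronglyMeasurable F) (hFi : Integrable (fun ω ↦ F (W ω, U ω)) P) :
    ∫ ω, F (W ω, U ω) ∂P = ∫ ω, ∫ u, F (W ω, u) ∂η (W ω) ∂P := by
  have hlaw : P.map (fun ω ↦ (W ω, U ω)) = P.map W ⊗ₘ η := by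
    rw [← compProd_map_condDistrib hU.aemeasurable, Measure.compProd_congr hη]
  have hFi' : Integrable F (P.map W ⊗ₘ η) := by
    rw [← hlaw, integrable_map_measure hF.aestronglyMeasurable (hW.prodMk hU).aemeasurable]
    exact hFi
  rw [← integral_map (hW.prodMk hU).aemeasurable hF.aestronglyMeasurable, hlaw,
    Measure.integral_compProd hFi', integral_map hW.aemeasurable
      (hF.integral_kernel_prod_right' (κ := η)).aestronglyMeasurable]

section CondIndep

variable [StandardBorelSpace Ω] [StandardBorelSpace β] [Nonempty β] [StandardBorelSpace γ]
  [Nonempty γ] {W : Ω → α} {T : Ω → β} {U : Ω → γ} (hW : Measurable W)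

theorem integral_comp_prodMk_of_condIndepFun (hT : Measurable T) (hU : Measurable U)
    (hTU : T ⟂ᵢ[W, hW; P] U) {F : α × β × γ → E} (hF : StronglyMeasurable F)
    (hFi : Integrable (fun ω ↦ F (W ω, T ω, U ω)) P) :
    ∫ ω, F (W ω, T ω, U ω) ∂P = ∫ ω, ∫ u, F (W ω, T ω, u) ∂condDistrib U W P (W ω) ∂P :=
  integral_comp_prodMk_of_condDistrib_ae_eq (F := fun q ↦ F (q.1.1, q.1.2, q.2)) (hW.prodMk hT)
    hU ((condIndepFun_iff_condDistrib_prod_ae_eq_prodMkRight hU hT hW).mp hTU)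
    (hF.comp_measurable (by fun_prop)) hFi

theorem integral_mul_comp_of_condIndepFun (hT : Measurable T) (hU : Measurable U)
    (hTU : T ⟂ᵢ[W, hW; P] U) {G : α × β → ℝ} (hG : Measurable G)
    (hGi : Integrable (fun ω ↦ G (W ω, T ω)) P) {h : α × β × γ → ℝ} (hh : Measurable h)
    {C : ℝ} (hC : ∀ q, ‖h q‖ ≤ C) :
    ∫ ω, G (W ω, T ω) * h (W ω, T ω, U ω) ∂P
      = ∫ ω, G (W ω, T ω) * ∫ u, h (W ω, T ω, u) ∂condDistrib U W P (W ω) ∂P := by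
  rw [integral_comp_prodMk_of_condIndepFun hW hT hU hTU (F := fun q ↦ G (q.1, q.2.1) * h q)
    (by fun_prop : Measurable _).stronglyMeasurable
    (hGi.mul_bdd (hh.comp (by fun_prop)).aestronglyMeasurable (.of_forall fun ω ↦ hC _))]
  simp_rw [integral_const_mul]

theorem integral_comp_prodMk_of_condIndepFun_of_condDistrib_eq (hT : Measurable T)
    (hU : Measurable U) (hTU : T ⟂ᵢ[W, hW; P] U) {ν : Measure γ}
    (hν : ∀ᵐ w ∂P.map W, condDistrib U W P w = ν) {F : α × β × γ → E}
    (hF : StronglyMeasurable F) (hFi : Integrable (fun ω ↦ F (W ω, T ω, U ω)) P) :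
    ∫ ω, F (W ω, T ω, U ω) ∂P = ∫ ω, ∫ u, F (W ω, T ω, u) ∂ν ∂P := by
  rw [integral_comp_prodMk_of_condIndepFun hW hT hU hTU hF hFi]
  refine integral_congr_ae ?_
  filter_upwards [ae_of_ae_map hW.aemeasurable hν] with ω hω
  rw [hω]

end CondIndep

theorem integral_mul_comp_of_condExp_ae_eq {W : Ω → α} (hW : Measurable W) {Y : Ω → ℝ}
    (hY : Integrable Y P) {r : α → ℝ} (hr : P[Y | mα.comap W] =ᵐ[P] r ∘ W) {ψ : α → ℝ}
    (hψ : Measurable ψ) {C : ℝ} (hψC : ∀ a, ‖ψ a‖ ≤ C) :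
    ∫ ω, Y ω * ψ (W ω) ∂P = ∫ ω, r (W ω) * ψ (W ω) ∂P := by
  have hψW : StronglyMeasurable[mα.comap W] (ψ ∘ W) :=
    (hψ.comp (Measurable.of_comap_le le_rfl)).stronglyMeasurable
  have hψY : Integrable (ψ ∘ W * Y) P :=
    hY.bdd_mul (hψ.comp hW).aestronglyMeasurable (.of_forall fun ω ↦ hψC (W ω))
  calc ∫ ω, Y ω * ψ (W ω) ∂P = ∫ ω, P[ψ ∘ W * Y | mα.comap W] ω ∂P := by
        rw [integral_condExp hW.comap_le]; simp_rw [mul_comm (Y _)]; rfl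
    _ = ∫ ω, ψ (W ω) * r (W ω) ∂P := by
        refine integral_congr_ae ?_
        filter_upwards [condExp_mul_of_stronglyMeasurable_left hψW hψY hY, hr] with ω h1 h2
        simp [h1, h2]
    _ = ∫ ω, r (W ω) * ψ (W ω) ∂P := by simp_rw [mul_comm]

theorem integral_gain_mul_treated_eq_integral_mte [StandardBorelSpace Ω] [StandardBorelSpace β]
    [Nonempty β] {X : Ω → α} {Z : Ω → β} {V Y0 Y1 : Ω → ℝ} (hX : Measurable X)
    (hZ : Measurable Z) (hV : Measurable V) (hY0 : Measurable Y0) (hY1 : Measurable Y1)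
    (hY0i : Integrable Y0 P) (hY1i : Integrable Y1 P) {π : α × β → ℝ} (hπ : Measurable π)
    (hCI : Z ⟂ᵢ[X, hX; P] fun ω ↦ (Y0 ω, Y1 ω, V ω))
    (hUnif : ∀ᵐ x ∂P.map X, condDistrib V X P x = volume.restrict (Icc (0 : ℝ) 1))
    {m : α × ℝ → ℝ} (hm : Measurable m)
    (hmte : P[Y1 - Y0 | MeasurableSpace.comap (fun ω ↦ (X ω, V ω)) inferInstance]
      =ᵐ[P] m ∘ fun ω ↦ (X ω, V ω)) :
    ∫ ω, (Y1 ω - Y0 ω) * (if π (X ω, Z ω) > V ω then 1 else 0) ∂P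
      = ∫ ω, (∫ v in Icc (0 : ℝ) 1, m (X ω, v) * (if π (X ω, Z ω) > v then 1 else 0)) ∂P := by
  set T : Ω → ℝ × ℝ × ℝ := fun ω ↦ (Y0 ω, Y1 ω, V ω)
  have hT : Measurable T := by fun_prop
  let ind : α × β × ℝ → ℝ := fun q ↦ if π (q.1, q.2.1) > q.2.2 then 1 else 0
  have hind : Measurable ind :=
    Measurable.ite (measurableSet_lt (by fun_prop) (hπ.comp (by fun_prop))) measurable_const
      measurable_const
  have hind_le : ∀ q, ‖ind q‖ ≤ 1 := fun q ↦ by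
    simp only [ind]; split_ifs <;> simp
  let φ : α × ℝ → ℝ := fun xv ↦ ∫ z, ind (xv.1, z, xv.2) ∂condDistrib Z X P xv.1
  have hφ : Measurable φ :=
    ((hind.comp (by fun_prop) : Measurable fun q : (α × ℝ) × β ↦
      ind (q.1.1, q.2, q.1.2)).stronglyMeasurable.integral_kernel_prod_right'
        (κ := (condDistrib Z X P).prodMkRight ℝ)).measurable
  have hφ_le : ∀ xv, ‖φ xv‖ ≤ 1 := fun xv ↦ by
    simpa using norm_integral_le_of_norm_le_const (μ := condDistrib Z X P xv.1)
      (.of_forall fun z ↦ hind_le _)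
  have hM : Integrable (fun ω ↦ m (X ω, V ω)) P := integrable_condExp.congr hmte
  calc ∫ ω, (Y1 ω - Y0 ω) * ind (X ω, Z ω, V ω) ∂P
      = ∫ ω, (Y1 ω - Y0 ω) * φ (X ω, V ω) ∂P :=
        integral_mul_comp_of_condIndepFun hX hT hZ hCI.symm (G := fun q ↦ q.2.2.1 - q.2.1)
          (h := fun q ↦ ind (q.1, q.2.2, q.2.1.2.2)) (by fun_prop) (hY1i.sub hY0i)
          (hind.comp (by fun_prop)) (fun _ ↦ hind_le _)
    _ = ∫ ω, m (X ω, V ω) * φ (X ω, V ω) ∂P :=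
        integral_mul_comp_of_condExp_ae_eq (hX.prodMk hV) (hY1i.sub hY0i) hmte hφ hφ_le
    _ = ∫ ω, m (X ω, V ω) * ind (X ω, Z ω, V ω) ∂P :=
        (integral_mul_comp_of_condIndepFun hX hT hZ hCI.symm (G := fun q ↦ m (q.1, q.2.2.2))
          (h := fun q ↦ ind (q.1, q.2.2, q.2.1.2.2)) (by fun_prop) hM (hind.comp (by fun_prop))
          (fun _ ↦ hind_le _)).symm
    _ = _ :=
        integral_comp_prodMk_of_condIndepFun_of_condDistrib_eq hX hZ hV
          (hCI.comp measurable_id (measurable_snd.snd : Measurable fun t : ℝ × ℝ × ℝ ↦ t.2.2))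
          hUnif (F := fun q ↦ m (q.1, q.2.2) * ind q)
          (by fun_prop : Measurable _).stronglyMeasurable
          (hM.mul_bdd (hind.comp (by fun_prop)).aestronglyMeasurable (.of_forall fun _ ↦ hind_le _))

end ProbabilityTheory

theorem roy_att_linear_general
    {Ω : Type*} [MeasurableSpace Ω] [StandardBorelSpace Ω]
    (P : Measure Ω) [IsProbabilityMeasure P]
    {k : ℕ} (X : Ω → (Fin k → ℝ)) (Z V Y0 Y1 : Ω → ℝ)
    (hX : Measurable X) (hZ : Measurable Z) (hV : Measurable V)
    (hY0m : Measurable Y0) (hY1m : Measurable Y1)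
    (hY0int : Integrable Y0 P) (hY1int : Integrable Y1 P)
    (pi : (Fin k → ℝ) × ℝ → ℝ) (hpi : Measurable pi)
    (hpi01 : ∀ q, pi q ∈ Set.Icc (0:ℝ) 1)
    (A : Ω → ℝ) (hA : A = fun ω => if pi (X ω, Z ω) > V ω then (1:ℝ) else 0)
    (hCI : CondIndepFun (MeasurableSpace.comap X inferInstance) hX.comap_le Z
      (fun ω => (Y0 ω, Y1 ω, V ω)) P)
    (hUnif : ∀ᵐ x ∂(P.map X),
      condDistrib V X P x = volume.restrict (Set.Icc (0:ℝ) 1))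
    (α0 α1 ζ0 ζ1 : ℝ) (β0 β1 : Fin k → ℝ)
    (he0 : P[Y0 | MeasurableSpace.comap (fun ω => (X ω, V ω)) inferInstance]
      =ᵐ[P] fun ω => α0 - 0.5 * ζ0 + (∑ i, β0 i * X ω i) + ζ0 * V ω)
    (he1 : P[Y1 | MeasurableSpace.comap (fun ω => (X ω, V ω)) inferInstance]
      =ᵐ[P] fun ω => α1 - 0.5 * ζ1 + (∑ i, β1 i * X ω i) + ζ1 * V ω) :
    (∫ ω, (Y1 ω - Y0 ω) * A ω ∂P
        = ∫ ω, ((α1 - α0 - 0.5 * (ζ1 - ζ0)) * pi (X ω, Z ω)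
            + (∑ i, (β1 i - β0 i) * X ω i) * pi (X ω, Z ω)
            + 0.5 * (ζ1 - ζ0) * (pi (X ω, Z ω)) ^ 2) ∂P)
    ∧ (0 < P {ω | A ω = 1} →
        ∫ ω, (Y1 ω - Y0 ω) ∂(P[|{ω | A ω = 1}])
          = (P {ω | A ω = 1}).toReal⁻¹
              * ∫ ω, ((α1 - α0 - 0.5 * (ζ1 - ζ0)) * pi (X ω, Z ω)
                  + (∑ i, (β1 i - β0 i) * X ω i) * pi (X ω, Z ω)
                  + 0.5 * (ζ1 - ζ0) * (pi (X ω, Z ω)) ^ 2) ∂P) := by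
  subst hA
  beta_reduce
  have hmte : P[Y1 - Y0 | MeasurableSpace.comap (fun ω ↦ (X ω, V ω)) inferInstance]
      =ᵐ[P] (fun xv : (Fin k → ℝ) × ℝ ↦ α1 - α0 - 0.5 * (ζ1 - ζ0)
        + ∑ i, (β1 i - β0 i) * xv.1 i + (ζ1 - ζ0) * xv.2) ∘ fun ω ↦ (X ω, V ω) := by
    filter_upwards [condExp_sub hY1int hY0int
      (MeasurableSpace.comap (fun ω ↦ (X ω, V ω)) inferInstance), he0, he1] with ω hsub h0 h1
    simp only [hsub, Pi.sub_apply, h0, h1, Function.comp_apply, sub_mul, Finset.sum_sub_distrib]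
    ring
  have heq6 : ∫ ω, (Y1 ω - Y0 ω) * (if pi (X ω, Z ω) > V ω then 1 else 0) ∂P
      = ∫ ω, ((α1 - α0 - 0.5 * (ζ1 - ζ0)) * pi (X ω, Z ω)
        + (∑ i, (β1 i - β0 i) * X ω i) * pi (X ω, Z ω)
        + 0.5 * (ζ1 - ζ0) * pi (X ω, Z ω) ^ 2) ∂P := by
    rw [integral_gain_mul_treated_eq_integral_mte hX hZ hV hY0m hY1m hY0int hY1int hpi hCI hUnif
      (by fun_prop) hmte]
    refine integral_congr_ae (.of_forall fun ω ↦ ?_)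
    simp only
    rw [setIntegral_Icc_affine_mul_ite_lt (hpi01 _)]
    ring
  refine ⟨heq6, fun _ ↦ ?_⟩
  have hS : MeasurableSet {ω | (if pi (X ω, Z ω) > V ω then (1 : ℝ) else 0) = 1} :=
    (Measurable.ite (measurableSet_lt hV (hpi.comp (hX.prodMk hZ))) measurable_const
      measurable_const) (measurableSet_singleton 1)
  rw [← heq6, integral_cond_eq_inv_mul_integral_indicator hS]
  congr 1
  refine integral_congr_ae (.of_forall fun ω ↦ ?_)
  by_cases h : pi (X ω, Z ω) > V ω <;> simp [indicator, h]

/-- Equation (6): under the generalized Roy model with the linear outcome model,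
`E[(Y₁ − Y₀)·A] = E[c·π + bᵀX·π + s·π²]` with `c = α₁ − α₀ − 0.5(ζ₁ − ζ₀)`, `b = β₁ − β₀`,
`s = 0.5(ζ₁ − ζ₀)`; and if `P(A=1) > 0` the ATT is `P(A=1)⁻¹` times that expectation. -/
theorem roy_att_linear
    {Ω : Type*} [MeasurableSpace Ω] [StandardBorelSpace Ω] [Nonempty Ω]
    (P : Measure Ω) [IsProbabilityMeasure P]
    {k : ℕ} (X : Ω → (Fin k → ℝ)) (Z V Y0 Y1 : Ω → ℝ)
    (hX : Measurable X) (hZ : Measurable Z) (hV : Measurable V)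
    (hY0m : Measurable Y0) (hY1m : Measurable Y1)
    (hY0int : Integrable Y0 P) (hY1int : Integrable Y1 P)
    (pi : (Fin k → ℝ) × ℝ → ℝ) (hpi : Measurable pi)
    (hpi01 : ∀ q, pi q ∈ Set.Icc (0:ℝ) 1)
    (A : Ω → ℝ) (hA : A = fun ω => if pi (X ω, Z ω) > V ω then (1:ℝ) else 0)
    (Y : Ω → ℝ) (hY : Y = fun ω => A ω * Y1 ω + (1 - A ω) * Y0 ω)
    (hCI : CondIndepFun (MeasurableSpace.comap X inferInstance) hX.comap_le Z
      (fun ω => (Y0 ω, Y1 ω, V ω)) P)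
    (hUnif : ∀ᵐ x ∂(P.map X),
      condDistrib V X P x = volume.restrict (Set.Icc (0:ℝ) 1))
    (α0 α1 ζ0 ζ1 : ℝ) (β0 β1 : Fin k → ℝ)
    (he0 : P[Y0 | MeasurableSpace.comap (fun ω => (X ω, V ω)) inferInstance]
      =ᵐ[P] fun ω => α0 - 0.5 * ζ0 + (∑ i, β0 i * X ω i) + ζ0 * V ω)
    (he1 : P[Y1 | MeasurableSpace.comap (fun ω => (X ω, V ω)) inferInstance]
      =ᵐ[P] fun ω => α1 - 0.5 * ζ1 + (∑ i, β1 i * X ω i) + ζ1 * V ω)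
    (hint : Integrable (fun ω => (Y1 ω - Y0 ω) * A ω) P)
    (hXpi : ∀ i, Integrable (fun ω => X ω i * pi (X ω, Z ω)) P) :
    (∫ ω, (Y1 ω - Y0 ω) * A ω ∂P
        = ∫ ω, ((α1 - α0 - 0.5 * (ζ1 - ζ0)) * pi (X ω, Z ω)
            + (∑ i, (β1 i - β0 i) * X ω i) * pi (X ω, Z ω)
            + 0.5 * (ζ1 - ζ0) * (pi (X ω, Z ω)) ^ 2) ∂P)
    ∧ (0 < P {ω | A ω = 1} →
        ∫ ω, (Y1 ω - Y0 ω) ∂(P[|{ω | A ω = 1}])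
          = (P {ω | A ω = 1}).toReal⁻¹
              * ∫ ω, ((α1 - α0 - 0.5 * (ζ1 - ζ0)) * pi (X ω, Z ω)
                  + (∑ i, (β1 i - β0 i) * X ω i) * pi (X ω, Z ω)
                  + 0.5 * (ζ1 - ζ0) * (pi (X ω, Z ω)) ^ 2) ∂P) :=
  roy_att_linear_general P X Z V Y0 Y1 hX hZ hV hY0m hY1m hY0int hY1int pi hpi hpi01 A hA hCI hUnif
    α0 α1 ζ0 ζ1 β0 β1 he0 he1
end

section
/- (General-model average treatment effect on the treated, Supplementary Equation (3).) Under the generalized Roy model with the general polynomial outcome model of order S, assuming all displayed quantities are integrable, E[(Y₁ − Y₀)·A] = E[(α₁ − α₀ − Σ_{s=1}^S (ζ_{1s} − ζ_{0s})/(s+1))·π + (β₁ − β₀ − Σ_{s=1}^S (ξ_{1s} − ξ_{0s})/(s+1))ᵀX·π + Σ_{s=1}^S ((ζ_{1s} − ζ_{0s}) + (ξ_{1s} − ξ_{0s})ᵀX)·π^{s+1}/(s+1)], where π = π(X,Z). Consequently, if P(A=1) > 0, then E[Y₁ − Y₀ | A = 1] = P(A=1)⁻¹ times this expectation, i.e.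 the ATT equals P(A=1)⁻¹E[r_ATT(X,Z)]ᵀγ. -/
/-!
Conditional independence of `Z` and `(Y₀, Y₁, V)` given `X` says that, given `(X, Y₀, Y₁, V)`,
`Z` still follows its conditional law given `X` alone. Integrating `Z` out turns
`A = 1{V < π(X, Z)}` into a bounded function of `(X, V)`, against which `Y₁ - Y₀` may be
replaced by its conditional mean `(e₁ - e₀)(X, V)`; putting `A` back gives
`E[(Y₁ - Y₀) A] = E[(e₁ - e₀)(X, V) A]`. The same conditional independence makes `V` uniform
on `[0, 1]` and independent of `(X, Z)`, so by Fubini this is `E[∫₀^{π(X,Z)} (e₁ - e₀)(X, v) dv]`,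
and integrating the polynomial in `v` gives `r_ATT(X, Z)ᵀγ`.
-/

open MeasureTheory ProbabilityTheory

/-- The conditional mean `e_a(x, v)` of the polynomial outcome model. -/
noncomputable def polyOutcome {k : ℕ} (S : ℕ) (α : ℝ) (β : Fin k → ℝ) (ζ : ℕ → ℝ)
    (ξ : ℕ → Fin k → ℝ) (x : Fin k → ℝ) (v : ℝ) : ℝ :=
  α + (∑ i, β i * x i)
    + ∑ s ∈ Finset.Icc 1 S, (ζ s + ∑ i, ξ s i * x i) * (v ^ s - 1 / ((s : ℝ) + 1))

/-- `r_ATT(x, z)ᵀγ` as a function of `x` and `p = π(x, z)`. -/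
noncomputable def attWeight {k : ℕ} (S : ℕ) (α : ℝ) (β : Fin k → ℝ) (ζ : ℕ → ℝ)
    (ξ : ℕ → Fin k → ℝ) (x : Fin k → ℝ) (p : ℝ) : ℝ :=
  (α - ∑ s ∈ Finset.Icc 1 S, ζ s / ((s : ℝ) + 1)) * p
    + (∑ i, (β i - ∑ s ∈ Finset.Icc 1 S, ξ s i / ((s : ℝ) + 1)) * x i) * p
    + ∑ s ∈ Finset.Icc 1 S, (ζ s + ∑ i, ξ s i * x i) * p ^ (s + 1) / ((s : ℝ) + 1)

section PolynomialOutcome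

variable {k S : ℕ}

theorem polyOutcome_sub (α₀ α₁ : ℝ) (β₀ β₁ : Fin k → ℝ) (ζ₀ ζ₁ : ℕ → ℝ) (ξ₀ ξ₁ : ℕ → Fin k → ℝ)
    (x : Fin k → ℝ) (v : ℝ) :
    polyOutcome S α₁ β₁ ζ₁ ξ₁ x v - polyOutcome S α₀ β₀ ζ₀ ξ₀ x v
      = polyOutcome S (α₁ - α₀) (β₁ - β₀) (ζ₁ - ζ₀) (ξ₁ - ξ₀) x v := by
  simp only [polyOutcome, Pi.sub_apply, sub_mul, Finset.sum_sub_distrib, sub_add_sub_comm]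

theorem measurable_polyOutcome (α : ℝ) (β : Fin k → ℝ) (ζ : ℕ → ℝ) (ξ : ℕ → Fin k → ℝ) :
    Measurable fun q : (Fin k → ℝ) × ℝ => polyOutcome S α β ζ ξ q.1 q.2 := by
  unfold polyOutcome; fun_prop

theorem attWeight_eq (α : ℝ) (β : Fin k → ℝ) (ζ : ℕ → ℝ) (ξ : ℕ → Fin k → ℝ)
    (x : Fin k → ℝ) (p : ℝ) :
    attWeight S α β ζ ξ x p = (α + ∑ i, β i * x i) * p
      + ∑ s ∈ Finset.Icc 1 S, (ζ s + ∑ i, ξ s i * x i) * (p ^ (s + 1) - p) / ((s : ℝ) + 1) := by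
  have hslope : ∑ i, (β i - ∑ s ∈ Finset.Icc 1 S, ξ s i / ((s : ℝ) + 1)) * x i
      = ∑ i, β i * x i - ∑ s ∈ Finset.Icc 1 S, (∑ i, ξ s i * x i) / ((s : ℝ) + 1) := by
    simp only [sub_mul, Finset.sum_sub_distrib, Finset.sum_mul, Finset.sum_div]
    rw [Finset.sum_comm]
    exact congrArg _ (Finset.sum_congr rfl fun s _ => Finset.sum_congr rfl fun i _ => by ring)
  have hsplit : ∑ s ∈ Finset.Icc 1 S, (ζ s + ∑ i, ξ s i * x i) * (p ^ (s + 1) - p) / ((s : ℝ) + 1)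
      = ∑ s ∈ Finset.Icc 1 S, (ζ s + ∑ i, ξ s i * x i) * p ^ (s + 1) / ((s : ℝ) + 1)
        - (∑ s ∈ Finset.Icc 1 S, ζ s / ((s : ℝ) + 1)) * p
        - (∑ s ∈ Finset.Icc 1 S, (∑ i, ξ s i * x i) / ((s : ℝ) + 1)) * p := by
    simp only [Finset.sum_mul, ← Finset.sum_sub_distrib]
    exact Finset.sum_congr rfl fun s _ => by ring
  rw [attWeight, hslope, hsplit]
  ring

theorem intervalIntegral_polyOutcome (α : ℝ) (β : Fin k → ℝ) (ζ : ℕ → ℝ) (ξ : ℕ → Fin k → ℝ)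
    (x : Fin k → ℝ) (p : ℝ) :
    ∫ v in (0 : ℝ)..p, polyOutcome S α β ζ ξ x v = attWeight S α β ζ ξ x p := by
  have hint : ∀ s : ℕ, IntervalIntegrable (fun v : ℝ => v ^ s - 1 / ((s : ℝ) + 1)) volume 0 p :=
    fun s => (by fun_prop : Continuous _).intervalIntegrable _ _
  simp only [polyOutcome]
  rw [intervalIntegral.integral_add intervalIntegrable_const
      ((by fun_prop : Continuous _).intervalIntegrable _ _),
    intervalIntegral.integral_const, intervalIntegral.integral_finsetSum
      (fun s _ => (hint s).const_mul _), attWeight_eq, smul_eq_mul, sub_zero, mul_comm]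
  refine congrArg _ (Finset.sum_congr rfl fun s _ => ?_)
  rw [intervalIntegral.integral_const_mul, intervalIntegral.integral_sub
    ((continuous_pow _).intervalIntegrable _ _) intervalIntegrable_const, integral_pow,
    intervalIntegral.integral_const, smul_eq_mul, sub_zero, zero_pow s.succ_ne_zero, sub_zero]
  ring

end PolynomialOutcome

theorem integral_mul_eq_of_condExp_ae_eq {Ω : Type*} {m m₀ : MeasurableSpace Ω} {P : Measure Ω}
    [IsFiniteMeasure P] (hm : m ≤ m₀) {U D φ : Ω → ℝ} (hU : Integrable U P)
    (hUD : P[U|m] =ᵐ[P] D) (hφ : StronglyMeasurable[m] φ) {C : ℝ} (hφC : ∀ ω, ‖φ ω‖ ≤ C) :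
    ∫ ω, U ω * φ ω ∂P = ∫ ω, D ω * φ ω ∂P := by
  have hUφ : Integrable (U * φ) P :=
    hU.mul_bdd (hφ.mono hm).aestronglyMeasurable (Filter.Eventually.of_forall hφC)
  calc ∫ ω, U ω * φ ω ∂P = ∫ ω, (P[U * φ|m]) ω ∂P := (integral_condExp hm).symm
    _ = ∫ ω, D ω * φ ω ∂P := by
        refine integral_congr_ae ?_
        filter_upwards [condExp_mul_of_stronglyMeasurable_right hφ hUφ hU, hUD] with ω h1 h2
        rw [h1, Pi.mul_apply, h2]

section ConditionalIndependence

variable {Ω α β γ : Type*} [MeasurableSpace Ω] [StandardBorelSpace Ω]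
  [MeasurableSpace α] [MeasurableSpace β] [MeasurableSpace γ]
  [StandardBorelSpace β] [Nonempty β] [StandardBorelSpace γ] [Nonempty γ]
  {P : Measure Ω} [IsFiniteMeasure P] {X : Ω → α} {Z : Ω → β} {W : Ω → γ}

theorem integral_mul_eq_integral_mul_integral_condDistrib
    (hX : Measurable X) (hZ : Measurable Z) (hW : Measurable W)
    (hCI : CondIndepFun (MeasurableSpace.comap X inferInstance) hX.comap_le Z W P)
    {f : α × γ → ℝ} (hf : Measurable f) (hfi : Integrable (fun ω => f (X ω, W ω)) P)
    {h : (α × γ) × β → ℝ} (hh : Measurable h) {C : ℝ} (hC : ∀ p, ‖h p‖ ≤ C) :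
    ∫ ω, f (X ω, W ω) * h ((X ω, W ω), Z ω) ∂P
      = ∫ ω, f (X ω, W ω) * ∫ z, h ((X ω, W ω), z) ∂(condDistrib Z X P (X ω)) ∂P := by
  have hXW : Measurable fun ω => (X ω, W ω) := hX.prodMk hW
  have hkernel : condDistrib Z (fun ω => (X ω, W ω)) P
      =ᵐ[P.map fun ω => (X ω, W ω)] (condDistrib Z X P).prodMkRight γ :=
    (condIndepFun_iff_condDistrib_prod_ae_eq_prodMkRight hZ hW hX).1 hCI.symm
  have hjoint : P.map (fun ω => ((X ω, W ω), Z ω))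
      = (P.map fun ω => (X ω, W ω)) ⊗ₘ (condDistrib Z X P).prodMkRight γ := by
    rw [← Measure.compProd_congr hkernel, compProd_map_condDistrib hZ.aemeasurable]
  set F : (α × γ) × β → ℝ := fun q => f q.1 * h q with hF
  have hFm : Measurable F := (hf.comp measurable_fst).mul hh
  have hFi : Integrable F (P.map fun ω => ((X ω, W ω), Z ω)) := by
    rw [integrable_map_measure hFm.aestronglyMeasurable (hXW.prodMk hZ).aemeasurable]
    exact hfi.mul_bdd (hh.comp (hXW.prodMk hZ)).aestronglyMeasurable
      (Filter.Eventually.of_forall fun ω => hC _)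
  have hG : Measurable fun q : α × γ => f q * ∫ z, h (q, z) ∂(condDistrib Z X P q.1) :=
    hf.mul (hh.stronglyMeasurable.integral_kernel_prod_right'
      (κ := (condDistrib Z X P).prodMkRight γ)).measurable
  calc ∫ ω, f (X ω, W ω) * h ((X ω, W ω), Z ω) ∂P
      = ∫ q, F q ∂(P.map fun ω => ((X ω, W ω), Z ω)) :=
        (integral_map (hXW.prodMk hZ).aemeasurable hFm.aestronglyMeasurable).symm
    _ = ∫ q, f q * ∫ z, h (q, z) ∂(condDistrib Z X P q.1) ∂(P.map fun ω => (X ω, W ω)) := by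
        rw [hjoint] at hFi ⊢
        rw [Measure.integral_compProd hFi]
        simp only [hF, integral_const_mul, Kernel.prodMkRight_apply]
    _ = _ := integral_map hXW.aemeasurable hG.aestronglyMeasurable

theorem integral_mul_eq_of_condExp_ae_eq_of_condIndepFun
    (hX : Measurable X) (hZ : Measurable Z) (hW : Measurable W)
    (hCI : CondIndepFun (MeasurableSpace.comap X inferInstance) hX.comap_le Z W P)
    {δ : Type*} [MeasurableSpace δ] {v : γ → δ} (hv : Measurable v)
    {f : α × γ → ℝ} (hf : Measurable f) (hfi : Integrable (fun ω => f (X ω, W ω)) P)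
    {g : α × δ → ℝ} (hg : Measurable g)
    (hfg : P[fun ω => f (X ω, W ω)|MeasurableSpace.comap (fun ω => (X ω, v (W ω))) inferInstance]
      =ᵐ[P] fun ω => g (X ω, v (W ω)))
    {h : (α × β) × δ → ℝ} (hh : Measurable h) {C : ℝ} (hC : ∀ r, ‖h r‖ ≤ C) :
    ∫ ω, f (X ω, W ω) * h ((X ω, Z ω), v (W ω)) ∂P
      = ∫ ω, g (X ω, v (W ω)) * h ((X ω, Z ω), v (W ω)) ∂P := by
  set H : α × δ → ℝ := fun q => ∫ z, h ((q.1, z), q.2) ∂(condDistrib Z X P q.1)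
  have hh' : Measurable fun r : (α × γ) × β => h ((r.1.1, r.2), v r.1.2) := by fun_prop
  have hH : StronglyMeasurable H :=
    (hh.comp (by fun_prop : Measurable fun r : (α × δ) × β => ((r.1.1, r.2), r.1.2))
      ).stronglyMeasurable.integral_kernel_prod_right' (κ := (condDistrib Z X P).prodMkRight δ)
  have hHC : ∀ q, ‖H q‖ ≤ C := fun q => by
    simpa using norm_integral_le_of_norm_le_const (μ := condDistrib Z X P q.1)
      (Filter.Eventually.of_forall fun z => hC ((q.1, z), q.2))
  have hHXV : StronglyMeasurable[MeasurableSpace.comap (fun ω => (X ω, v (W ω))) inferInstance]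
      fun ω => H (X ω, v (W ω)) :=
    hH.comp_measurable (comap_measurable _)
  calc ∫ ω, f (X ω, W ω) * h ((X ω, Z ω), v (W ω)) ∂P
      = ∫ ω, f (X ω, W ω) * H (X ω, v (W ω)) ∂P :=
        integral_mul_eq_integral_mul_integral_condDistrib hX hZ hW hCI hf hfi hh' fun r => hC _
    _ = ∫ ω, g (X ω, v (W ω)) * H (X ω, v (W ω)) ∂P :=
        integral_mul_eq_of_condExp_ae_eq (hX.prodMk (hv.comp hW)).comap_le hfi hfg hHXV
          fun ω => hHC _
    _ = ∫ ω, g (X ω, v (W ω)) * h ((X ω, Z ω), v (W ω)) ∂P :=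
        (integral_mul_eq_integral_mul_integral_condDistrib hX hZ hW hCI
          (hg.comp (by fun_prop : Measurable fun q : α × γ => (q.1, v q.2)))
          (integrable_condExp.congr hfg) hh' fun r => hC _).symm

theorem map_prod_eq_prod_of_condIndepFun_of_condDistrib_ae_eq
    {δ : Type*} [MeasurableSpace δ] [StandardBorelSpace δ] [Nonempty δ] {V : Ω → δ}
    (hX : Measurable X) (hZ : Measurable Z) (hV : Measurable V)
    (hCI : CondIndepFun (MeasurableSpace.comap X inferInstance) hX.comap_le Z V P)
    {ν : Measure δ} [SFinite ν] (hν : ∀ᵐ x ∂P.map X, condDistrib V X P x = ν) :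
    P.map (fun ω => ((X ω, Z ω), V ω)) = (P.map fun ω => (X ω, Z ω)).prod ν := by
  have hfst : MeasurePreserving Prod.fst (P.map fun ω => (X ω, Z ω)) (P.map X) :=
    ⟨measurable_fst, by rw [Measure.map_map measurable_fst (hX.prodMk hZ)]; rfl⟩
  have hkernel : condDistrib V (fun ω => (X ω, Z ω)) P
      =ᵐ[P.map fun ω => (X ω, Z ω)] Kernel.const _ ν := by
    filter_upwards [(condIndepFun_iff_condDistrib_prod_ae_eq_prodMkRight hV hZ hX).1 hCI,
      hfst.quasiMeasurePreserving.ae hν] with q hq hνq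
    rw [hq, Kernel.prodMkRight_apply, hνq, Kernel.const_apply]
  rw [← compProd_map_condDistrib hV.aemeasurable, Measure.compProd_congr hkernel,
    Measure.compProd_const]

end ConditionalIndependence

theorem setIntegral_Icc_mul_ite_lt {g : ℝ → ℝ} {p : ℝ} (hp : p ∈ Set.Icc (0 : ℝ) 1) :
    ∫ v in Set.Icc (0 : ℝ) 1, g v * (if v < p then 1 else 0) = ∫ v in (0 : ℝ)..p, g v := by
  have hind : (fun v => g v * (if v < p then 1 else 0)) = (Set.Iio p).indicator g := by
    ext v; by_cases h : v < p <;> simp [h]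
  have hset : Set.Iio p ∩ Set.Icc (0 : ℝ) 1 = Set.Ico 0 p := by
    ext v
    simp only [Set.mem_inter_iff, Set.mem_Iio, Set.mem_Icc, Set.mem_Ico]
    constructor
    · rintro ⟨h1, h2, -⟩; exact ⟨h2, h1⟩
    · rintro ⟨h1, h2⟩; exact ⟨h2, h1, h2.le.trans hp.2⟩
  rw [hind, integral_indicator measurableSet_Iio, Measure.restrict_restrict measurableSet_Iio, hset,
    integral_Ico_eq_integral_Ioo, ← integral_Ioc_eq_integral_Ioo,
    intervalIntegral.integral_of_le hp.1]

theorem integral_mul_ite_lt_eq_integral_intervalIntegral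
    {Ω E : Type*} [MeasurableSpace Ω] [MeasurableSpace E] {P : Measure Ω} [IsFiniteMeasure P]
    {Q : Ω → E} {V : Ω → ℝ} (hQ : Measurable Q) (hV : Measurable V)
    (hQV : P.map (fun ω => (Q ω, V ω)) = (P.map Q).prod (volume.restrict (Set.Icc 0 1)))
    {g : E × ℝ → ℝ} (hg : Measurable g) (hgi : Integrable (fun ω => g (Q ω, V ω)) P)
    {p : E → ℝ} (hp : Measurable p) (hp01 : ∀ q, p q ∈ Set.Icc (0 : ℝ) 1) :
    ∫ ω, g (Q ω, V ω) * (if V ω < p (Q ω) then 1 else 0) ∂P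
      = ∫ ω, (∫ v in (0 : ℝ)..p (Q ω), g (Q ω, v)) ∂P := by
  set Φ : E × ℝ → ℝ := fun r => g r * (if r.2 < p r.1 then 1 else 0)
  have hΦm : Measurable Φ :=
    hg.mul (Measurable.ite (measurableSet_lt measurable_snd (hp.comp measurable_fst))
      measurable_const measurable_const)
  have hΦi : Integrable Φ ((P.map Q).prod (volume.restrict (Set.Icc 0 1))) := by
    rw [← hQV, integrable_map_measure hΦm.aestronglyMeasurable (hQ.prodMk hV).aemeasurable]
    refine hgi.mul_bdd (c := 1) ?_ (Filter.Eventually.of_forall fun ω => ?_)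
    · exact (Measurable.ite (measurableSet_lt hV (hp.comp hQ)) measurable_const
        measurable_const).aestronglyMeasurable
    · dsimp only [Function.comp]; split_ifs <;> simp
  have hinner : AEStronglyMeasurable (fun q => ∫ v in (0 : ℝ)..p q, g (q, v)) (P.map Q) :=
    hΦi.integral_prod_left.aestronglyMeasurable.congr
      (Filter.Eventually.of_forall fun q => setIntegral_Icc_mul_ite_lt (hp01 q))
  calc ∫ ω, g (Q ω, V ω) * (if V ω < p (Q ω) then 1 else 0) ∂P
      = ∫ r, Φ r ∂(P.map fun ω => (Q ω, V ω)) :=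
        (integral_map (hQ.prodMk hV).aemeasurable hΦm.aestronglyMeasurable).symm
    _ = ∫ q, (∫ v in (0 : ℝ)..p q, g (q, v)) ∂(P.map Q) := by
        rw [hQV, integral_prod _ hΦi]
        exact integral_congr_ae (Filter.Eventually.of_forall fun q =>
          setIntegral_Icc_mul_ite_lt (hp01 q))
    _ = _ := integral_map hQ.aemeasurable hinner

theorem integral_cond_eq_toReal_inv_mul_integral_mul_ite {Ω : Type*} [MeasurableSpace Ω]
    {P : Measure Ω} {c : Ω → Prop} [DecidablePred c] (hc : MeasurableSet {ω | c ω}) (U : Ω → ℝ) :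
    ∫ ω, U ω ∂(P[|{ω | (if c ω then (1 : ℝ) else 0) = 1}])
      = (P {ω | (if c ω then (1 : ℝ) else 0) = 1}).toReal⁻¹
        * ∫ ω, U ω * (if c ω then 1 else 0) ∂P := by
  have hset : {ω | (if c ω then (1 : ℝ) else 0) = 1} = {ω | c ω} := by
    ext ω; by_cases h : c ω <;> simp [h]
  have hind : ∀ ω, U ω * (if c ω then 1 else 0) = {ω | c ω}.indicator U ω := fun ω => by
    by_cases h : c ω <;> simp [h]
  rw [hset, ProbabilityTheory.cond, integral_smul_measure, ENNReal.toReal_inv, smul_eq_mul,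
    integral_congr_ae (Filter.Eventually.of_forall hind), integral_indicator hc]

theorem roy_att_general_general {S : ℕ}
    {Ω : Type*} [MeasurableSpace Ω] [StandardBorelSpace Ω]
    (P : Measure Ω) [IsProbabilityMeasure P]
    {k : ℕ} (X : Ω → (Fin k → ℝ)) (Z V Y0 Y1 : Ω → ℝ)
    (hX : Measurable X) (hZ : Measurable Z) (hV : Measurable V)
    (hY0m : Measurable Y0) (hY1m : Measurable Y1)
    (hY0int : Integrable Y0 P) (hY1int : Integrable Y1 P)
    (pi : (Fin k → ℝ) × ℝ → ℝ) (hpi : Measurable pi)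
    (hpi01 : ∀ q, pi q ∈ Set.Icc (0:ℝ) 1)
    (A : Ω → ℝ) (hA : A = fun ω => if pi (X ω, Z ω) > V ω then (1:ℝ) else 0)
    (hCI : CondIndepFun (MeasurableSpace.comap X inferInstance) hX.comap_le Z
      (fun ω => (Y0 ω, Y1 ω, V ω)) P)
    (hUnif : ∀ᵐ x ∂(P.map X),
      condDistrib V X P x = volume.restrict (Set.Icc (0:ℝ) 1))
    (α0 α1 : ℝ) (β0 β1 : Fin k → ℝ) (ζ0 ζ1 : ℕ → ℝ) (ξ0 ξ1 : ℕ → Fin k → ℝ)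
    (he0 : P[Y0 | MeasurableSpace.comap (fun ω => (X ω, V ω)) inferInstance]
      =ᵐ[P] fun ω => α0 + (∑ i, β0 i * X ω i)
        + ∑ s ∈ Finset.Icc 1 S, (ζ0 s + ∑ i, ξ0 s i * X ω i) * (V ω ^ s - 1 / ((s : ℝ) + 1)))
    (he1 : P[Y1 | MeasurableSpace.comap (fun ω => (X ω, V ω)) inferInstance]
      =ᵐ[P] fun ω => α1 + (∑ i, β1 i * X ω i)
        + ∑ s ∈ Finset.Icc 1 S, (ζ1 s + ∑ i, ξ1 s i * X ω i) * (V ω ^ s - 1 / ((s : ℝ) + 1))) :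
    (∫ ω, (Y1 ω - Y0 ω) * A ω ∂P
        = ∫ ω, ((α1 - α0 - ∑ s ∈ Finset.Icc 1 S, (ζ1 s - ζ0 s) / ((s : ℝ) + 1))
              * pi (X ω, Z ω)
            + (∑ i, (β1 i - β0 i
                - ∑ s ∈ Finset.Icc 1 S, (ξ1 s i - ξ0 s i) / ((s : ℝ) + 1)) * X ω i)
              * pi (X ω, Z ω)
            + ∑ s ∈ Finset.Icc 1 S,
                ((ζ1 s - ζ0 s) + ∑ i, (ξ1 s i - ξ0 s i) * X ω i)
                  * (pi (X ω, Z ω)) ^ (s + 1) / ((s : ℝ) + 1)) ∂P)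
    ∧ (0 < P {ω | A ω = 1} →
        ∫ ω, (Y1 ω - Y0 ω) ∂(P[|{ω | A ω = 1}])
          = (P {ω | A ω = 1}).toReal⁻¹
              * ∫ ω, ((α1 - α0 - ∑ s ∈ Finset.Icc 1 S, (ζ1 s - ζ0 s) / ((s : ℝ) + 1))
                    * pi (X ω, Z ω)
                  + (∑ i, (β1 i - β0 i
                      - ∑ s ∈ Finset.Icc 1 S, (ξ1 s i - ξ0 s i) / ((s : ℝ) + 1)) * X ω i)
                    * pi (X ω, Z ω)
                  + ∑ s ∈ Finset.Icc 1 S,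
                      ((ζ1 s - ζ0 s) + ∑ i, (ξ1 s i - ξ0 s i) * X ω i)
                        * (pi (X ω, Z ω)) ^ (s + 1) / ((s : ℝ) + 1)) ∂P) := by
  subst hA
  set d : (Fin k → ℝ) × ℝ → ℝ :=
    fun q => polyOutcome S (α1 - α0) (β1 - β0) (ζ1 - ζ0) (ξ1 - ξ0) q.1 q.2
  have hCE : P[fun ω => Y1 ω - Y0 ω|MeasurableSpace.comap (fun ω => (X ω, V ω)) inferInstance]
      =ᵐ[P] fun ω => d (X ω, V ω) :=
    (condExp_sub hY1int hY0int _).trans ((he1.sub he0).trans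
      (Filter.Eventually.of_forall fun ω => polyOutcome_sub _ _ _ _ _ _ _ _ _ _))
  have hcondMean := integral_mul_eq_of_condExp_ae_eq_of_condIndepFun hX hZ
    (hY0m.prodMk (hY1m.prodMk hV)) hCI (v := fun w => w.2.2) (by fun_prop)
    (f := fun q => q.2.2.1 - q.2.1) (by fun_prop) (hY1int.sub hY0int)
    (measurable_polyOutcome _ _ _ _) hCE (h := fun r => if r.2 < pi r.1 then 1 else 0)
    (Measurable.ite (measurableSet_lt measurable_snd (hpi.comp measurable_fst))
      measurable_const measurable_const) (C := 1) (fun r => by split_ifs <;> simp)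
  have hFubini := integral_mul_ite_lt_eq_integral_intervalIntegral (hX.prodMk hZ) hV
    (map_prod_eq_prod_of_condIndepFun_of_condDistrib_ae_eq hX hZ hV
      (hCI.comp measurable_id (measurable_snd.comp measurable_snd)) hUnif)
    ((measurable_polyOutcome _ _ _ _).comp (measurable_fst.fst.prodMk measurable_snd))
    (integrable_condExp.congr hCE) hpi hpi01
  have hATT := hcondMean.trans (hFubini.trans (integral_congr_ae (Filter.Eventually.of_forall
    fun ω => intervalIntegral_polyOutcome _ _ _ _ _ _)))
  refine ⟨hATT, fun _ => ?_⟩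
  exact (integral_cond_eq_toReal_inv_mul_integral_mul_ite (c := fun ω => V ω < pi (X ω, Z ω))
    (measurableSet_lt hV (hpi.comp (hX.prodMk hZ))) _).trans (congrArg _ hATT)

/-- Supplementary Equation (3): under the generalized Roy model with the general polynomial
outcome model of order `S`, `E[(Y₁ − Y₀)·A] = E[r_ATT(X,Z)ᵀγ]`, and if `P(A=1) > 0` the ATT
equals `P(A=1)⁻¹` times that expectation. -/
theorem roy_att_general {S : ℕ} (hS : 1 ≤ S)
    {Ω : Type*} [MeasurableSpace Ω] [StandardBorelSpace Ω] [Nonempty Ω]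
    (P : Measure Ω) [IsProbabilityMeasure P]
    {k : ℕ} (X : Ω → (Fin k → ℝ)) (Z V Y0 Y1 : Ω → ℝ)
    (hX : Measurable X) (hZ : Measurable Z) (hV : Measurable V)
    (hY0m : Measurable Y0) (hY1m : Measurable Y1)
    (hY0int : Integrable Y0 P) (hY1int : Integrable Y1 P)
    (pi : (Fin k → ℝ) × ℝ → ℝ) (hpi : Measurable pi)
    (hpi01 : ∀ q, pi q ∈ Set.Icc (0:ℝ) 1)
    (A : Ω → ℝ) (hA : A = fun ω => if pi (X ω, Z ω) > V ω then (1:ℝ) else 0)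
    (Y : Ω → ℝ) (hY : Y = fun ω => A ω * Y1 ω + (1 - A ω) * Y0 ω)
    (hCI : CondIndepFun (MeasurableSpace.comap X inferInstance) hX.comap_le Z
      (fun ω => (Y0 ω, Y1 ω, V ω)) P)
    (hUnif : ∀ᵐ x ∂(P.map X),
      condDistrib V X P x = volume.restrict (Set.Icc (0:ℝ) 1))
    (α0 α1 : ℝ) (β0 β1 : Fin k → ℝ) (ζ0 ζ1 : ℕ → ℝ) (ξ0 ξ1 : ℕ → Fin k → ℝ)
    (he0 : P[Y0 | MeasurableSpace.comap (fun ω => (X ω, V ω)) inferInstance]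
      =ᵐ[P] fun ω => α0 + (∑ i, β0 i * X ω i)
        + ∑ s ∈ Finset.Icc 1 S, (ζ0 s + ∑ i, ξ0 s i * X ω i) * (V ω ^ s - 1 / ((s : ℝ) + 1)))
    (he1 : P[Y1 | MeasurableSpace.comap (fun ω => (X ω, V ω)) inferInstance]
      =ᵐ[P] fun ω => α1 + (∑ i, β1 i * X ω i)
        + ∑ s ∈ Finset.Icc 1 S, (ζ1 s + ∑ i, ξ1 s i * X ω i) * (V ω ^ s - 1 / ((s : ℝ) + 1)))
    (hint : Integrable (fun ω => (Y1 ω - Y0 ω) * A ω) P)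
    (hXpi : ∀ i, Integrable (fun ω => X ω i * pi (X ω, Z ω)) P)
    (hXpis : ∀ i, ∀ s ∈ Finset.Icc 1 S,
      Integrable (fun ω => X ω i * (pi (X ω, Z ω)) ^ (s + 1)) P) :
    (∫ ω, (Y1 ω - Y0 ω) * A ω ∂P
        = ∫ ω, ((α1 - α0 - ∑ s ∈ Finset.Icc 1 S, (ζ1 s - ζ0 s) / ((s : ℝ) + 1))
              * pi (X ω, Z ω)
            + (∑ i, (β1 i - β0 i
                - ∑ s ∈ Finset.Icc 1 S, (ξ1 s i - ξ0 s i) / ((s : ℝ) + 1)) * X ω i)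
              * pi (X ω, Z ω)
            + ∑ s ∈ Finset.Icc 1 S,
                ((ζ1 s - ζ0 s) + ∑ i, (ξ1 s i - ξ0 s i) * X ω i)
                  * (pi (X ω, Z ω)) ^ (s + 1) / ((s : ℝ) + 1)) ∂P)
    ∧ (0 < P {ω | A ω = 1} →
        ∫ ω, (Y1 ω - Y0 ω) ∂(P[|{ω | A ω = 1}])
          = (P {ω | A ω = 1}).toReal⁻¹
              * ∫ ω, ((α1 - α0 - ∑ s ∈ Finset.Icc 1 S, (ζ1 s - ζ0 s) / ((s : ℝ) + 1))
                    * pi (X ω, Z ω)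
                  + (∑ i, (β1 i - β0 i
                      - ∑ s ∈ Finset.Icc 1 S, (ξ1 s i - ξ0 s i) / ((s : ℝ) + 1)) * X ω i)
                    * pi (X ω, Z ω)
                  + ∑ s ∈ Finset.Icc 1 S,
                      ((ζ1 s - ζ0 s) + ∑ i, (ξ1 s i - ξ0 s i) * X ω i)
                        * (pi (X ω, Z ω)) ^ (s + 1) / ((s : ℝ) + 1)) ∂P) :=
  roy_att_general_general P X Z V Y0 Y1 hX hZ hV hY0m hY1m hY0int hY1int pi hpi hpi01 A hA hCI hUnif
    α0 α1 β0 β1 ζ0 ζ1 ξ0 ξ1 he0 he1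
end
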